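/- arXiv:2310.17449 — 7 statements merged into one kernel-verified Lean document; each statement's English description precedes it below -/
import Mathlib

section
/- Let ω ∈ ℂ with ω ≠ 0, let M ≥ 1 and a_1, …, a_M ∈ ℂ with a_M ≠ 0, and let F(ζ) = Σ_{j=1}^M a_j/(ω−ζ)^j, which is holomorphic on the disk {|ζ| < |ω|}; denote by (α_n)_{n≥0} its Taylor coefficients at 0. Suppose there exist ρ > 0 and a holomorphic function G on the disk {|ζ| < ρ} whose Taylor coefficients (b_n)_{n≥0} at 0 satisfy α_n · b_n = 1 for all n ≥ 0 (so G is the Hadamard inverse of F). Then there exist constants c_0, …, c_{M−1} ∈ ℂ with c_{M−1} ≠ 0 such that, for all ζ in some neighborhood of 0, Σ_{j=0}^{M−1} c_j ζ^j G^{(j)}(ζ) = 1/(1 − ωζ). -/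
open Metric Polynomial FormalMultilinearSeries



lemma coeff_ofScalars (u : ℕ → ℂ) (n : ℕ) :
    (FormalMultilinearSeries.ofScalars ℂ u).coeff n = u n := by
  simp [FormalMultilinearSeries.coeff, FormalMultilinearSeries.ofScalars, Pi.one_def,
    List.ofFn_const]

lemma hasFPowerSeriesAt_of_hasSum {u : ℕ → ℂ} {f : ℂ → ℂ} {r : ℝ} (hr : 0 < r)
    (hu : ∀ ζ : ℂ, ‖ζ‖ < r → HasSum (fun n => u n * ζ ^ n) (f ζ)) :
    HasFPowerSeriesAt f (FormalMultilinearSeries.ofScalars ℂ u) 0 := by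
  rw [hasFPowerSeriesAt_iff]
  filter_upwards [Metric.ball_mem_nhds 0 hr] with z hz
  simp only [coeff_ofScalars, smul_eq_mul, zero_add]
  simpa [mul_comm] using hu z (by simpa using hz)

lemma coeff_unique {u v : ℕ → ℂ} {f : ℂ → ℂ} {r : ℝ} (hr : 0 < r)
    (hu : ∀ ζ : ℂ, ‖ζ‖ < r → HasSum (fun n => u n * ζ ^ n) (f ζ))
    (hv : ∀ ζ : ℂ, ‖ζ‖ < r → HasSum (fun n => v n * ζ ^ n) (f ζ)) : u = v := by
  have h := (hasFPowerSeriesAt_of_hasSum hr hu).eq_formalMultilinearSeries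
    (hasFPowerSeriesAt_of_hasSum hr hv)
  exact FormalMultilinearSeries.ofScalars_series_injective (𝕜 := ℂ) (E := ℂ) h

lemma hasFPowerSeriesOnBall_of_hasSum {u : ℕ → ℂ} {f : ℂ → ℂ} {r : ℝ} (hr : 0 < r)
    (hu : ∀ ζ : ℂ, ‖ζ‖ < r → HasSum (fun n => u n * ζ ^ n) (f ζ)) :
    HasFPowerSeriesOnBall f (FormalMultilinearSeries.ofScalars ℂ u) 0 (ENNReal.ofReal r) where
  r_le := by
    apply ENNReal.le_of_forall_nnreal_lt
    intro t ht
    have ht' : (t : ℝ) < r := by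
      rw [← ENNReal.ofReal_coe_nnreal] at ht
      exact (ENNReal.ofReal_lt_ofReal_iff hr).1 ht
    apply FormalMultilinearSeries.le_radius_of_tendsto
    have hs := (hu ((t : ℝ) : ℂ) (by simpa using ht')).summable.tendsto_atTop_zero
    have heq : (fun n => ‖(FormalMultilinearSeries.ofScalars ℂ u) n‖ * (t : ℝ) ^ n)
        = fun n => ‖u n * (((t : ℝ) : ℂ)) ^ n‖ := by
      funext n
      rw [FormalMultilinearSeries.ofScalars_norm, norm_mul, norm_pow, Complex.norm_real,
        Real.norm_eq_abs, NNReal.abs_eq]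
    rw [heq]
    have := tendsto_norm.comp hs
    simpa [Function.comp_def] using this
  r_pos := by simp [hr]
  hasSum := by
    intro y hy
    have hy' : ‖y‖ < r := by
      simpa [edist_zero_right, enorm_eq_nnnorm, ENNReal.lt_ofReal_iff_toReal_lt] using hy
    simpa [_root_.coeff_ofScalars, smul_eq_mul, mul_comm] using hu y hy'

lemma hasSum_deriv {u : ℕ → ℂ} {f : ℂ → ℂ} {r : ℝ} (hr : 0 < r)
    (hu : ∀ ζ : ℂ, ‖ζ‖ < r → HasSum (fun n => u n * ζ ^ n) (f ζ)) :
    ∀ ζ : ℂ, ‖ζ‖ < r → HasSum (fun n : ℕ => ((n : ℂ) + 1) * u (n + 1) * ζ ^ n) (deriv f ζ) := by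
  intro ζ hζ
  have hp := hasFPowerSeriesOnBall_of_hasSum hr hu
  rcases eq_or_ne ζ 0 with rfl | hζ0
  · have hder : deriv f 0 = u 1 := by
      have := hp.hasFPowerSeriesAt.deriv
      rw [this]
      have : ((FormalMultilinearSeries.ofScalars ℂ u) 1 fun _ => (1:ℂ))
          = (FormalMultilinearSeries.ofScalars ℂ u).coeff 1 := rfl
      rw [this, coeff_ofScalars]
    rw [hder]
    have := hasSum_single (f := fun n : ℕ => ((n : ℂ) + 1) * u (n + 1) * (0:ℂ) ^ n) 0
      (by intro n hn; simp [zero_pow hn])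
    simpa using this
  · have hmem : ζ ∈ Metric.eball (0 : ℂ) (ENNReal.ofReal r) := by
      rw [Metric.mem_eball, edist_zero_right, enorm_eq_nnnorm,
        show (ENNReal.ofReal r) = ((r.toNNReal : NNReal) : ENNReal) from rfl, ENNReal.coe_lt_coe,
        ← NNReal.coe_lt_coe, coe_nnnorm, Real.coe_toNNReal _ hr.le]
      exact hζ
    have hd := hp.fderiv
    have h1 := hd.hasSum hmem
    rw [zero_add] at h1
    have h2 := (ContinuousLinearMap.apply ℂ ℂ (1 : ℂ)).hasSum h1
    have key : ∀ n, (FormalMultilinearSeries.ofScalars ℂ u).derivSeries n (fun _ => ζ) (1:ℂ)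
        = ((n : ℂ) + 1) * u (n + 1) * ζ ^ n := by
      intro n
      have hdiag := FormalMultilinearSeries.derivSeries_apply_diag
        (FormalMultilinearSeries.ofScalars ℂ u) n ζ
      have hlin : (FormalMultilinearSeries.ofScalars ℂ u).derivSeries n (fun _ => ζ) ζ
          = ((FormalMultilinearSeries.ofScalars ℂ u).derivSeries n (fun _ => ζ) (1:ℂ)) * ζ := by
        have := ((FormalMultilinearSeries.ofScalars ℂ u).derivSeries n
          (fun _ => ζ)).map_smul ζ (1 : ℂ)
        simpa [smul_eq_mul, mul_comm] using this
      have hval : ((FormalMultilinearSeries.ofScalars ℂ u) (n+1) fun _ => ζ)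
          = u (n+1) * ζ ^ (n+1) := by
        rw [FormalMultilinearSeries.ofScalars_apply_eq, smul_eq_mul]
      apply mul_right_cancel₀ hζ0
      rw [← hlin, hdiag, hval]
      push_cast [nsmul_eq_mul]
      ring
    have heq : (fun n => ((ContinuousLinearMap.apply ℂ ℂ (1:ℂ))
        ((FormalMultilinearSeries.ofScalars ℂ u).derivSeries n fun _ => ζ)))
        = fun n : ℕ => ((n : ℂ) + 1) * u (n + 1) * ζ ^ n := by
      funext n; exact key n
    rw [heq] at h2
    simp only [ContinuousLinearMap.apply_apply] at h2
    rwa [fderiv_apply_one_eq_deriv] at h2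

lemma hasSum_iteratedDeriv {b : ℕ → ℂ} {G : ℂ → ℂ} {r : ℝ} (hr : 0 < r)
    (hb : ∀ ζ : ℂ, ‖ζ‖ < r → HasSum (fun n => b n * ζ ^ n) (G ζ)) (j : ℕ) :
    ∀ ζ : ℂ, ‖ζ‖ < r → HasSum (fun n : ℕ => ((n + j).descFactorial j : ℂ) * b (n + j) * ζ ^ n)
      (iteratedDeriv j G ζ) := by
  induction j with
  | zero => simpa using hb
  | succ j ih =>
    intro ζ hζ
    have step := hasSum_deriv (u := fun n : ℕ => ((n + j).descFactorial j : ℂ) * b (n + j)) hr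
      (by intro z hz; simpa [mul_assoc] using ih z hz) ζ hζ
    rw [iteratedDeriv_succ]
    have hterm : ∀ n : ℕ, ((n + (j + 1)).descFactorial (j + 1) : ℂ) * b (n + (j + 1))
        = ((n : ℂ) + 1) * (((n + 1 + j).descFactorial j : ℂ) * b (n + 1 + j)) := by
      intro n
      have h1 : n + (j + 1) = n + 1 + j := by omega
      have h2 : (n + 1 + j).descFactorial (j + 1) = (n + 1) * (n + 1 + j).descFactorial j := by
        rw [Nat.descFactorial_succ]
        congr 1
        omega
      rw [h1, h2]
      push_cast
      ring
    have heq : (fun n : ℕ => ((n + (j + 1)).descFactorial (j + 1) : ℂ) * b (n + (j + 1)) * ζ ^ n)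
        = fun n : ℕ => ((n : ℂ) + 1) * (((n + 1 + j).descFactorial j : ℂ) * b (n + 1 + j)) * ζ ^ n := by
      funext n; rw [hterm]
    rw [heq]
    exact step

lemma hasSum_pow_mul_iteratedDeriv {b : ℕ → ℂ} {G : ℂ → ℂ} {r : ℝ} (hr : 0 < r)
    (hb : ∀ ζ : ℂ, ‖ζ‖ < r → HasSum (fun n => b n * ζ ^ n) (G ζ)) (j : ℕ) :
    ∀ ζ : ℂ, ‖ζ‖ < r → HasSum (fun n : ℕ => (n.descFactorial j : ℂ) * b n * ζ ^ n)
      (ζ ^ j * iteratedDeriv j G ζ) := by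
  intro ζ hζ
  have h := (hasSum_iteratedDeriv hr hb j ζ hζ).mul_left (ζ ^ j)
  have heq : (fun n : ℕ => ζ ^ j * (((n + j).descFactorial j : ℂ) * b (n + j) * ζ ^ n))
      = fun n : ℕ => ((n + j).descFactorial j : ℂ) * b (n + j) * ζ ^ (n + j) := by
    funext n; rw [pow_add]; ring
  rw [heq] at h
  have := (hasSum_nat_add_iff (f := fun n : ℕ => (n.descFactorial j : ℂ) * b n * ζ ^ n) j).1 h
  have hzero : ∑ n ∈ Finset.range j, (n.descFactorial j : ℂ) * b n * ζ ^ n = 0 := by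
    apply Finset.sum_eq_zero
    intro n hn
    rw [Nat.descFactorial_eq_zero_iff_lt.2 (Finset.mem_range.1 hn)]
    simp
  rwa [hzero, add_zero] at this


lemma exists_descPochhammer_repr (N : ℕ) :
    ∀ Q : Polynomial ℂ, Q.degree < ((N + 1 : ℕ) : WithBot ℕ) → ∃ c : ℕ → ℂ,
      c N = Q.coeff N ∧
      ∀ n : ℕ, ∑ j ∈ Finset.range (N + 1), c j * (descPochhammer ℂ j).eval (n : ℂ) = Q.eval (n : ℂ) := by
  induction N with
  | zero =>
    intro Q hQ
    refine ⟨fun _ => Q.coeff 0, rfl, fun n => ?_⟩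
    have : Q = Polynomial.C (Q.coeff 0) := by
      apply Polynomial.eq_C_of_degree_le_zero
      exact Nat.WithBot.lt_one_iff_le_zero.1 (by exact_mod_cast hQ)
    rw [this]
    simp [descPochhammer_zero]
  | succ N ih =>
    intro Q hQ
    set d := Q.coeff (N + 1) with hd
    set Q' := Q - Polynomial.C d * descPochhammer ℂ (N + 1) with hQ'
    have hmono : (descPochhammer ℂ (N + 1)).Monic := monic_descPochhammer ℂ (N + 1)
    have hnd : (descPochhammer ℂ (N + 1)).natDegree = N + 1 := descPochhammer_natDegree ℂ (N + 1)
    have hdeg : Q'.degree < ((N + 1 : ℕ) : WithBot ℕ) := by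
      rw [Polynomial.degree_lt_iff_coeff_zero]
      intro m hm
      have hm' : N + 1 ≤ m := by exact_mod_cast hm
      simp only [hQ', Polynomial.coeff_sub, Polynomial.coeff_C_mul]
      rcases eq_or_lt_of_le hm' with h | h
      · have h1 := hmono.coeff_natDegree
        rw [hnd] at h1
        rw [← h, h1, ← hd, mul_one, sub_self]
      · rw [Polynomial.coeff_eq_zero_of_degree_lt (lt_of_lt_of_le hQ (by exact_mod_cast h)),
          Polynomial.coeff_eq_zero_of_natDegree_lt (by omega : (descPochhammer ℂ (N+1)).natDegree < m)]
        ring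
    obtain ⟨c, hcN, hsum⟩ := ih Q' hdeg
    refine ⟨fun j => if j = N + 1 then d else c j, by simp, fun n => ?_⟩
    rw [Finset.sum_range_succ]
    have hrest : ∑ j ∈ Finset.range (N + 1),
        (if j = N + 1 then d else c j) * (descPochhammer ℂ j).eval (n : ℂ)
        = ∑ j ∈ Finset.range (N + 1), c j * (descPochhammer ℂ j).eval (n : ℂ) := by
      apply Finset.sum_congr rfl
      intro j hj
      have : j ≠ N + 1 := by
        have := Finset.mem_range.1 hj; omega
      rw [if_neg this]
    rw [hrest, hsum n]
    simp only [if_pos rfl, hQ']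
    simp [Polynomial.eval_sub, Polynomial.eval_mul]


lemma hasSum_beta (ω : ℂ) (hω : ω ≠ 0) (M : ℕ) (a : ℕ → ℂ) :
    ∀ ζ : ℂ, ‖ζ‖ < ‖ω‖ → HasSum
      (fun n : ℕ => (∑ j ∈ Finset.Icc 1 M,
        a j * ((n + j - 1).choose (j - 1) : ℂ) * (ω⁻¹) ^ (n + j)) * ζ ^ n)
      (∑ j ∈ Finset.Icc 1 M, a j / (ω - ζ) ^ j) := by
  intro ζ hζ
  have hx : ‖ζ * ω⁻¹‖ < 1 := by
    rw [norm_mul, norm_inv]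
    exact (mul_inv_lt_iff₀ (norm_pos_iff.2 hω)).2 (by simpa using hζ)
  have hsub : (1 : ℂ) - ζ * ω⁻¹ ≠ 0 := by
    intro h
    have : ‖(1 : ℂ) - ζ * ω⁻¹‖ = 0 := by rw [h, norm_zero]
    have h2 : (0:ℝ) < ‖(1:ℂ) - ζ * ω⁻¹‖ := by
      have := norm_sub_norm_le (1 : ℂ) (ζ * ω⁻¹)
      simp only [norm_one] at this
      linarith
    linarith
  have key : ∀ j ∈ Finset.Icc 1 M, HasSum
      (fun n : ℕ => a j * ((n + j - 1).choose (j - 1) : ℂ) * (ω⁻¹) ^ (n + j) * ζ ^ n)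
      (a j / (ω - ζ) ^ j) := by
    intro j hj
    obtain ⟨hj1, hjM⟩ := Finset.mem_Icc.1 hj
    have base := hasSum_choose_mul_geometric_of_norm_lt_one (j - 1) hx
    have h1 := base.mul_left (a j * (ω⁻¹) ^ j)
    have heq : (fun n : ℕ => a j * ω⁻¹ ^ j * (((n + (j-1)).choose (j-1) : ℂ) * (ζ * ω⁻¹) ^ n))
        = fun n : ℕ => a j * ((n + j - 1).choose (j - 1) : ℂ) * (ω⁻¹) ^ (n + j) * ζ ^ n := by
      funext n
      have : n + (j - 1) = n + j - 1 := by omega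
      rw [this, mul_pow, pow_add]
      ring
    rw [heq] at h1
    have hval : a j * ω⁻¹ ^ j * (1 / (1 - ζ * ω⁻¹) ^ (j - 1 + 1)) = a j / (ω - ζ) ^ j := by
      have hj' : j - 1 + 1 = j := by omega
      rw [hj']
      have hfac : ω - ζ = ω * (1 - ζ * ω⁻¹) := by
        field_simp
      rw [hfac, mul_pow]
      rw [div_eq_mul_inv, div_eq_mul_inv, mul_inv, inv_pow]
      ring
    rw [hval] at h1
    exact h1
  have h := hasSum_sum key
  have heq2 : (fun n : ℕ => ∑ j ∈ Finset.Icc 1 M,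
      a j * ((n + j - 1).choose (j - 1) : ℂ) * (ω⁻¹) ^ (n + j) * ζ ^ n)
      = fun n : ℕ => (∑ j ∈ Finset.Icc 1 M,
        a j * ((n + j - 1).choose (j - 1) : ℂ) * (ω⁻¹) ^ (n + j)) * ζ ^ n := by
    funext n
    rw [Finset.sum_mul]
  rwa [heq2] at h


section
variable (ω : ℂ) (M : ℕ) (a : ℕ → ℂ)

noncomputable def Pp : Polynomial ℂ :=
  ∑ j ∈ Finset.Icc 1 M, Polynomial.C (a j * (ω⁻¹) ^ j * (((j - 1).factorial : ℕ) : ℂ)⁻¹) *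
    ((descPochhammer ℂ (j - 1)).comp (Polynomial.X + Polynomial.C (((j - 1 : ℕ)) : ℂ)))

lemma Pp_eval (hω : ω ≠ 0) (n : ℕ) :
    (Pp ω M a).eval (n : ℂ) = (∑ j ∈ Finset.Icc 1 M,
      a j * ((n + j - 1).choose (j - 1) : ℂ) * (ω⁻¹) ^ (n + j)) * ω ^ n := by
  rw [Pp, Polynomial.eval_finset_sum, Finset.sum_mul]
  apply Finset.sum_congr rfl
  intro j hj
  obtain ⟨hj1, hjM⟩ := Finset.mem_Icc.1 hj
  rw [Polynomial.eval_mul, Polynomial.eval_C, Polynomial.eval_comp]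
  have hev : Polynomial.eval (n : ℂ) (Polynomial.X + Polynomial.C (((j - 1 : ℕ)) : ℂ))
      = ((n + (j - 1) : ℕ) : ℂ) := by
    push_cast
    simp
  rw [hev, descPochhammer_eval_eq_descFactorial,
    show n + (j - 1) = n + j - 1 from by omega]
  have hdf : ((n + j - 1).descFactorial (j - 1) : ℂ)
      = ((j - 1).factorial : ℂ) * ((n + j - 1).choose (j - 1) : ℂ) := by
    exact_mod_cast Nat.descFactorial_eq_factorial_mul_choose (n + j - 1) (j - 1)
  rw [hdf]
  have hfac : (((j - 1).factorial : ℕ) : ℂ) ≠ 0 := by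
    exact_mod_cast (j - 1).factorial_ne_zero
  have hpow : (ω⁻¹ : ℂ) ^ (n + j) * ω ^ n = ω⁻¹ ^ j := by
    rw [pow_add]
    have : (ω⁻¹ : ℂ) ^ n * ω ^ n = 1 := by
      rw [← mul_pow, inv_mul_cancel₀ hω, one_pow]
    calc ω⁻¹ ^ n * ω⁻¹ ^ j * ω ^ n = (ω⁻¹ ^ n * ω ^ n) * ω⁻¹ ^ j := by ring
    _ = ω⁻¹ ^ j := by rw [this, one_mul]
  calc a j * ω⁻¹ ^ j * (((j-1).factorial : ℂ))⁻¹ *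
        (((j-1).factorial : ℂ) * ((n + j - 1).choose (j - 1) : ℂ))
      = a j * ((n + j - 1).choose (j - 1) : ℂ) * ω⁻¹ ^ j := by
        field_simp
  _ = a j * ((n + j - 1).choose (j - 1) : ℂ) * (ω⁻¹ ^ (n + j) * ω ^ n) := by rw [hpow]
  _ = a j * ((n + j - 1).choose (j - 1) : ℂ) * ω⁻¹ ^ (n + j) * ω ^ n := by ring

lemma Pp_degree (hM : 1 ≤ M) : (Pp ω M a).degree < ((M : ℕ) : WithBot ℕ) := by
  rw [Polynomial.degree_lt_iff_coeff_zero]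
  intro m hm
  have hm' : M ≤ m := by exact_mod_cast hm
  rw [Pp, Polynomial.finset_sum_coeff]
  apply Finset.sum_eq_zero
  intro j hj
  obtain ⟨hj1, hjM⟩ := Finset.mem_Icc.1 hj
  rw [Polynomial.coeff_C_mul]
  have hnd : ((descPochhammer ℂ (j - 1)).comp
      (Polynomial.X + Polynomial.C (((j - 1 : ℕ)) : ℂ))).natDegree = j - 1 := by
    rw [Polynomial.natDegree_comp, descPochhammer_natDegree]
    rw [Polynomial.natDegree_X_add_C, mul_one]
  rw [Polynomial.coeff_eq_zero_of_natDegree_lt (by omega : ((descPochhammer ℂ (j - 1)).comp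
      (Polynomial.X + Polynomial.C (((j - 1 : ℕ)) : ℂ))).natDegree < m), mul_zero]

lemma Pp_coeff (hM : 1 ≤ M) :
    (Pp ω M a).coeff (M - 1) = a M * (ω⁻¹) ^ M * (((M - 1).factorial : ℕ) : ℂ)⁻¹ := by
  rw [Pp, Polynomial.finset_sum_coeff]
  rw [Finset.sum_eq_single M]
  · have hmono : ((descPochhammer ℂ (M - 1)).comp
        (Polynomial.X + Polynomial.C (((M - 1 : ℕ)) : ℂ))).Monic :=
      (monic_descPochhammer ℂ (M - 1)).comp_X_add_C _
    have hnd : ((descPochhammer ℂ (M - 1)).comp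
        (Polynomial.X + Polynomial.C (((M - 1 : ℕ)) : ℂ))).natDegree = M - 1 := by
      rw [Polynomial.natDegree_comp, descPochhammer_natDegree]
      rw [Polynomial.natDegree_X_add_C, mul_one]
    rw [Polynomial.coeff_C_mul]
    have h1 := hmono.coeff_natDegree
    rw [hnd] at h1
    rw [h1, mul_one]
  · intro j hj hjne
    obtain ⟨hj1, hjM⟩ := Finset.mem_Icc.1 hj
    rw [Polynomial.coeff_C_mul]
    have hnd : ((descPochhammer ℂ (j - 1)).comp
        (Polynomial.X + Polynomial.C (((j - 1 : ℕ)) : ℂ))).natDegree = j - 1 := by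
      rw [Polynomial.natDegree_comp, descPochhammer_natDegree]
      rw [Polynomial.natDegree_X_add_C, mul_one]
    rw [Polynomial.coeff_eq_zero_of_natDegree_lt (by rw [hnd]; omega), mul_zero]
  · intro h
    exact absurd (Finset.mem_Icc.2 ⟨hM, le_refl M⟩) h

end

/-- If a meromorphic function `F(ζ) = Σ_{j=1}^M a_j/(ω−ζ)^j` (with `a_M ≠ 0`) has a
Hadamard inverse `G` holomorphic near `0`, then `G` satisfies a linear ODE
`Σ_{j=0}^{M−1} c_j ζ^j G^{(j)}(ζ) = 1/(1−ωζ)` with `c_{M−1} ≠ 0`. -/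
theorem stmt0 (ω : ℂ) (hω : ω ≠ 0) (M : ℕ) (hM : 1 ≤ M)
    (a : ℕ → ℂ) (haM : a M ≠ 0) (α : ℕ → ℂ)
    (hα : ∀ ζ : ℂ, ‖ζ‖ < ‖ω‖ →
      HasSum (fun n => α n * ζ ^ n) (∑ j ∈ Finset.Icc 1 M, a j / (ω - ζ) ^ j))
    (ρ : ℝ) (hρ : 0 < ρ)
    (G : ℂ → ℂ) (hG : DifferentiableOn ℂ G (ball (0 : ℂ) ρ))
    (b : ℕ → ℂ) (hb : ∀ ζ : ℂ, ‖ζ‖ < ρ → HasSum (fun n => b n * ζ ^ n) (G ζ))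
    (hinv : ∀ n : ℕ, α n * b n = 1) :
    ∃ c : ℕ → ℂ, c (M - 1) ≠ 0 ∧ ∃ δ > 0, ∀ ζ : ℂ, ‖ζ‖ < δ →
      ∑ j ∈ Finset.range M, c j * ζ ^ j * iteratedDeriv j G ζ = 1 / (1 - ω * ζ) := by
  have hωpos : (0 : ℝ) < ‖ω‖ := norm_pos_iff.2 hω
  have hαβ : α = fun n : ℕ => ∑ j ∈ Finset.Icc 1 M,
      a j * ((n + j - 1).choose (j - 1) : ℂ) * (ω⁻¹) ^ (n + j) :=
    coeff_unique hωpos hα (hasSum_beta ω hω M a)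
  obtain ⟨c, hcN, hcsum⟩ := exists_descPochhammer_repr (M - 1) (Pp ω M a)
    (by rw [show M - 1 + 1 = M from by omega]; exact Pp_degree ω M a hM)
  refine ⟨c, ?_, min ρ ‖ω‖⁻¹, lt_min hρ (inv_pos.2 hωpos), ?_⟩
  · rw [hcN, Pp_coeff ω M a hM]
    exact mul_ne_zero (mul_ne_zero haM (pow_ne_zero _ (inv_ne_zero hω)))
      (inv_ne_zero (by exact_mod_cast (M - 1).factorial_ne_zero))
  · intro ζ hζ
    have hζρ : ‖ζ‖ < ρ := lt_of_lt_of_le hζ (min_le_left _ _)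
    have hζω : ‖ω * ζ‖ < 1 := by
      rw [norm_mul]
      have h2 : ‖ζ‖ < ‖ω‖⁻¹ := lt_of_lt_of_le hζ (min_le_right _ _)
      calc ‖ω‖ * ‖ζ‖ < ‖ω‖ * ‖ω‖⁻¹ := by exact mul_lt_mul_of_pos_left h2 hωpos
      _ = 1 := mul_inv_cancel₀ (ne_of_gt hωpos)
    have h1 : HasSum
        (fun n : ℕ => ∑ j ∈ Finset.range M, c j * ((n.descFactorial j : ℂ) * b n * ζ ^ n))
        (∑ j ∈ Finset.range M, c j * (ζ ^ j * iteratedDeriv j G ζ)) :=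
      hasSum_sum (fun j _ => (hasSum_pow_mul_iteratedDeriv hρ hb j ζ hζρ).mul_left (c j))
    have hterm : ∀ n : ℕ, ∑ j ∈ Finset.range M, c j * ((n.descFactorial j : ℂ) * b n * ζ ^ n)
        = (ω * ζ) ^ n := by
      intro n
      have e1 : ∑ j ∈ Finset.range M, c j * ((n.descFactorial j : ℂ) * b n * ζ ^ n)
          = (∑ j ∈ Finset.range M, c j * (n.descFactorial j : ℂ)) * (b n * ζ ^ n) := by
        rw [Finset.sum_mul]
        apply Finset.sum_congr rfl
        intro j _
        ring
      have e2 : ∑ j ∈ Finset.range M, c j * (n.descFactorial j : ℂ)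
          = (Pp ω M a).eval (n : ℂ) := by
        have h3 := hcsum n
        rw [show M - 1 + 1 = M from by omega] at h3
        rw [← h3]
        apply Finset.sum_congr rfl
        intro j _
        rw [descPochhammer_eval_eq_descFactorial]
      have e3 : (Pp ω M a).eval (n : ℂ) = α n * ω ^ n := by
        rw [Pp_eval ω M a hω n, hαβ]
      rw [e1, e2, e3]
      calc α n * ω ^ n * (b n * ζ ^ n) = α n * b n * (ω ^ n * ζ ^ n) := by ring
      _ = (ω * ζ) ^ n := by rw [hinv n, one_mul, mul_pow]
    have h2 : HasSum (fun n : ℕ => (ω * ζ) ^ n) (1 / (1 - ω * ζ)) := by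
      simpa [one_div] using hasSum_geometric_of_norm_lt_one hζω
    rw [funext hterm] at h1
    rw [← h1.unique h2]
    apply Finset.sum_congr rfl
    intro j _
    ring
end

section
/- Let (a_n)_{n≥0}, (b_n)_{n≥0}, (c_n)_{n≥0}, (d_n)_{n≥0} be sequences of complex numbers such that a_n b_n = 1 and (a_n + c_n) d_n = 1 for all n ≥ 0. Assume limsup_{n→∞} |b_n|^{1/n} < ∞ (i.e. Σ_{n≥0} b_n ζ^n has positive radius of convergence) and limsup_{n→∞} |c_n|^{1/n} = 0 (i.e. Σ_{n≥0} c_n ζ^n has infinite radius of convergence and defines an entire function). Then limsup_{n→∞} |d_n − b_n|^{1/n} = 0; that is, Σ_{n≥0} (d_n − b_n) ζ^n has infinite radius of convergence and defines an entire function. -/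
open Filter
open scoped NNReal ENNReal

private lemma aux_pow {x y : ENNReal} {n : ℕ} (hn : 1 ≤ n) (h : x ^ (1 / (n : ℝ)) ≤ y) :
    x ≤ y ^ n := by
  have hn' : (n : ℝ) ≠ 0 := Nat.cast_ne_zero.2 (by omega)
  calc x = (x ^ (1 / (n : ℝ))) ^ (n : ℝ) := by
        rw [← ENNReal.rpow_mul, one_div_mul_cancel hn', ENNReal.rpow_one]
    _ ≤ y ^ (n : ℝ) := ENNReal.rpow_le_rpow h (Nat.cast_nonneg n)
    _ = y ^ n := ENNReal.rpow_natCast y n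

private lemma aux_root {y : ENNReal} {n : ℕ} (hn : 1 ≤ n) :
    (y ^ n) ^ (1 / (n : ℝ)) = y := by
  have hn' : (n : ℝ) ≠ 0 := Nat.cast_ne_zero.2 (by omega)
  rw [← ENNReal.rpow_natCast y n, ← ENNReal.rpow_mul, mul_one_div, div_self hn',
    ENNReal.rpow_one]

/-- Perturbing a power series by an entire function changes its Hadamard inverse only by an
entire function: if `a_n b_n = 1`, `(a_n + c_n) d_n = 1`, `Σ b_n ζ^n` has positive radius
of convergence and `Σ c_n ζ^n` has infinite radius of convergence, then
`Σ (d_n − b_n) ζ^n` has infinite radius of convergence. -/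
theorem stmt2 (a b c d : ℕ → ℂ)
    (hab : ∀ n : ℕ, a n * b n = 1) (hcd : ∀ n : ℕ, (a n + c n) * d n = 1)
    (hb : atTop.limsup (fun n : ℕ => (‖b n‖₊ : ENNReal) ^ (1 / (n : ℝ))) < ⊤)
    (hc : atTop.limsup (fun n : ℕ => (‖c n‖₊ : ENNReal) ^ (1 / (n : ℝ))) = 0) :
    atTop.limsup (fun n : ℕ => (‖d n - b n‖₊ : ENNReal) ^ (1 / (n : ℝ))) = 0 := by
  -- key algebraic identity
  have key : ∀ n, d n - b n = -(c n * b n * d n) := by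
    intro n
    linear_combination b n * hcd n - d n * hab n
  -- a bound M for the coefficients b
  obtain ⟨r, hr1, hr2⟩ := exists_between hb
  set M : ℝ≥0 := r.toNNReal + 1 with hMdef
  have hM1 : 1 ≤ M := le_add_self
  have hMpos : 0 < M := lt_of_lt_of_le one_pos hM1
  have hrM : r ≤ (M : ENNReal) := by
    rw [← ENNReal.coe_toNNReal hr2.ne]
    exact_mod_cast (le_self_add : r.toNNReal ≤ M)
  have hbev : ∀ᶠ n : ℕ in atTop, ‖b n‖ ≤ (M : ℝ) ^ n := by
    filter_upwards [eventually_lt_of_limsup_lt hr1, eventually_ge_atTop 1] with n hn hn1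
    have h2 : (‖b n‖₊ : ENNReal) ≤ (M : ENNReal) ^ n := aux_pow hn1 (hn.le.trans hrM)
    rw [← ENNReal.coe_pow, ENNReal.coe_le_coe] at h2
    exact_mod_cast h2
  -- it suffices to show the sequence tends to 0
  have htend : Tendsto (fun n : ℕ => (‖d n - b n‖₊ : ENNReal) ^ (1 / (n : ℝ))) atTop (nhds 0) := by
    rw [ENNReal.tendsto_nhds_zero]
    intro ε hε
    set ε' : ENNReal := min ε 1 with hε'def
    have hε'pos : 0 < ε' := lt_min hε one_pos
    have hε'top : ε' ≠ ⊤ := ne_top_of_le_ne_top ENNReal.one_ne_top (min_le_right _ _)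
    set δ : ℝ≥0 := min (ε'.toNNReal / (2 * M ^ 2)) (1 / (2 * M)) with hδdef
    have hδpos : 0 < δ := by
      apply lt_min
      · exact div_pos (ENNReal.toNNReal_pos hε'pos.ne' hε'top) (by positivity)
      · exact div_pos one_pos (by positivity)
    have hcev : ∀ᶠ n : ℕ in atTop, ‖c n‖ ≤ (δ : ℝ) ^ n := by
      have hlt : atTop.limsup (fun n : ℕ => (‖c n‖₊ : ENNReal) ^ (1 / (n : ℝ))) < (δ : ENNReal) := by
        rw [hc]; exact_mod_cast hδpos
      filter_upwards [eventually_lt_of_limsup_lt hlt, eventually_ge_atTop 1] with n hn hn1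
      have h2 : (‖c n‖₊ : ENNReal) ≤ (δ : ENNReal) ^ n := aux_pow hn1 hn.le
      rw [← ENNReal.coe_pow, ENNReal.coe_le_coe] at h2
      exact_mod_cast h2
    filter_upwards [hbev, hcev, eventually_ge_atTop 1] with n hbn hcn hn1
    -- real-number bounds
    have hbnn : (0:ℝ) ≤ ‖b n‖ := norm_nonneg _
    have hcnn : (0:ℝ) ≤ ‖c n‖ := norm_nonneg _
    have hdnn : (0:ℝ) ≤ ‖d n‖ := norm_nonneg _
    have hδM : (δ : ℝ) * (M : ℝ) ≤ 1 / 2 := by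
      have h1 : δ * M ≤ (1 / (2 * M)) * M := mul_le_mul_left (min_le_right _ _) M
      have h2 : (1 / (2 * M)) * M = 1 / 2 := by
        field_simp
      rw [h2] at h1
      exact_mod_cast h1
    have hcb : ‖c n‖ * ‖b n‖ ≤ 1 / 2 := by
      have h1 : ‖c n‖ * ‖b n‖ ≤ (δ : ℝ) ^ n * (M : ℝ) ^ n :=
        mul_le_mul hcn hbn hbnn (by positivity)
      have h2 : (δ : ℝ) ^ n * (M : ℝ) ^ n = ((δ : ℝ) * (M : ℝ)) ^ n := (mul_pow _ _ _).symm
      have h3 : ((δ : ℝ) * (M : ℝ)) ^ n ≤ (1 / 2 : ℝ) ^ n :=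
        pow_le_pow_left₀ (by positivity) hδM n
      have h4 : (1 / 2 : ℝ) ^ n ≤ 1 / 2 := by
        calc (1 / 2 : ℝ) ^ n ≤ (1 / 2 : ℝ) ^ 1 :=
              pow_le_pow_of_le_one (by norm_num) (by norm_num) hn1
          _ = 1 / 2 := pow_one _
      linarith [h1, h2 ▸ h1, h3, h4]
    have hnorm_eq : ‖d n - b n‖ = ‖c n‖ * ‖b n‖ * ‖d n‖ := by
      rw [key n, norm_neg, norm_mul, norm_mul]
    have hd2 : ‖d n‖ ≤ 2 * ‖b n‖ := by
      have h1 : ‖d n‖ ≤ ‖b n‖ + ‖c n‖ * ‖b n‖ * ‖d n‖ := by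
        have : d n = b n + (d n - b n) := by ring
        calc ‖d n‖ = ‖b n + (d n - b n)‖ := by rw [← this]
          _ ≤ ‖b n‖ + ‖d n - b n‖ := norm_add_le _ _
          _ = ‖b n‖ + ‖c n‖ * ‖b n‖ * ‖d n‖ := by rw [hnorm_eq]
      nlinarith [mul_le_mul_of_nonneg_right hcb hdnn]
    have hmain : ‖d n - b n‖ ≤ 2 * ((δ * M ^ 2 : ℝ≥0) : ℝ) ^ n := by
      have h1 : ‖d n - b n‖ ≤ (δ : ℝ) ^ n * (M : ℝ) ^ n * (2 * (M : ℝ) ^ n) := by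
        rw [hnorm_eq]
        have hb2 : ‖d n‖ ≤ 2 * (M : ℝ) ^ n := hd2.trans (by linarith)
        have := mul_le_mul hcn hbn hbnn (by positivity)
        exact mul_le_mul this hb2 hdnn (by positivity)
      calc ‖d n - b n‖ ≤ (δ : ℝ) ^ n * (M : ℝ) ^ n * (2 * (M : ℝ) ^ n) := h1
        _ = 2 * ((δ : ℝ) * (M : ℝ) ^ 2) ^ n := by ring
        _ = 2 * ((δ * M ^ 2 : ℝ≥0) : ℝ) ^ n := by push_cast; ring
    -- move to ENNReal
    set K : ℝ≥0 := δ * M ^ 2 with hKdef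
    have hENN : (‖d n - b n‖₊ : ENNReal) ≤ 2 * (K : ENNReal) ^ n := by
      have h1 : ‖d n - b n‖₊ ≤ 2 * K ^ n := by
        rw [← NNReal.coe_le_coe]
        push_cast
        simpa using hmain
      calc (‖d n - b n‖₊ : ENNReal) ≤ ((2 * K ^ n : ℝ≥0) : ENNReal) := ENNReal.coe_le_coe.2 h1
        _ = 2 * (K : ENNReal) ^ n := by push_cast; ring
    have hroot : (‖d n - b n‖₊ : ENNReal) ^ (1 / (n : ℝ)) ≤ 2 * (K : ENNReal) := by
      calc (‖d n - b n‖₊ : ENNReal) ^ (1 / (n : ℝ))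
          ≤ (2 * (K : ENNReal) ^ n) ^ (1 / (n : ℝ)) :=
            ENNReal.rpow_le_rpow hENN (by positivity)
        _ = (2 : ENNReal) ^ (1 / (n : ℝ)) * ((K : ENNReal) ^ n) ^ (1 / (n : ℝ)) :=
            ENNReal.mul_rpow_of_nonneg _ _ (by positivity)
        _ = (2 : ENNReal) ^ (1 / (n : ℝ)) * (K : ENNReal) := by rw [aux_root hn1]
        _ ≤ 2 * (K : ENNReal) := by
            gcongr
            calc (2 : ENNReal) ^ (1 / (n : ℝ)) ≤ (2 : ENNReal) ^ (1 : ℝ) := by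
                  apply ENNReal.rpow_le_rpow_of_exponent_le (by norm_num)
                  rw [div_le_one (by exact_mod_cast hn1)]
                  exact_mod_cast hn1
              _ = 2 := ENNReal.rpow_one 2
    refine hroot.trans ?_
    -- 2 * K ≤ ε
    have hKle : δ * (2 * M ^ 2) ≤ ε'.toNNReal := by
      rw [← le_div_iff₀ (by positivity)]
      exact min_le_left _ _
    have h2K : (2 : ENNReal) * (K : ENNReal) ≤ ε' := by
      have : ((δ * (2 * M ^ 2) : ℝ≥0) : ENNReal) ≤ (ε'.toNNReal : ENNReal) :=
        ENNReal.coe_le_coe.2 hKle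
      rw [ENNReal.coe_toNNReal hε'top] at this
      calc (2 : ENNReal) * (K : ENNReal) = ((δ * (2 * M ^ 2) : ℝ≥0) : ENNReal) := by
            rw [hKdef]; push_cast; ring
        _ ≤ ε' := this
    exact h2K.trans (min_le_left _ _)
  exact htend.limsup_eq
end

section
/- Let ω ∈ ℂ with ω ≠ 0, let M, N ≥ 1 and A_1, …, A_M, B_1, …, B_N ∈ ℂ with A_M ≠ 0 and B_N ≠ 0. Let f₀(ζ) = Σ_{j=1}^M A_j/(1−ζ)^j and g₀(ζ) = Σ_{k=1}^N B_k/(ω−ζ)^k, with Taylor coefficients at 0 denoted (a_n)_{n≥0} and (b_n)_{n≥0} respectively. Then there exist C_1, …, C_{M+N−1} ∈ ℂ with C_{M+N−1} ≠ 0 such that, for all ζ in a neighborhood of 0, the Hadamard product Σ_{n≥0} a_n b_n ζ^n equals Σ_{j=1}^{M+N−1} C_j/(ω−ζ)^j. In particular, the Hadamard product of f₀ and g₀ extends to a rational function whose only pole is at ω, of order exactly M+N−1. -/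
open Metric Nat

open Polynomial in
/-- `Epoly k` is the polynomial whose value at `n : ℕ` is `k! * (n+k).choose k`. -/
noncomputable def Epoly (k : ℕ) : ℂ[X] :=
  ((ascPochhammer ℕ k).comp (X + C 1)).map (Nat.castRingHom ℂ)

lemma Epoly_monic (k : ℕ) : (Epoly k).Monic :=
  ((monic_ascPochhammer ℕ k).comp_X_add_C 1).map _

lemma Epoly_natDegree (k : ℕ) : (Epoly k).natDegree = k := by
  rw [Epoly, ((monic_ascPochhammer ℕ k).comp_X_add_C 1).natDegree_map,
    Polynomial.natDegree_comp, ascPochhammer_natDegree, Polynomial.natDegree_X_add_C, mul_one]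

lemma Epoly_eval (k n : ℕ) :
    (Epoly k).eval (n : ℂ) = (k ! : ℂ) * ((n + k).choose k : ℂ) := by
  have h1 : ((ascPochhammer ℕ k).comp (Polynomial.X + Polynomial.C 1)).eval n
      = (n + k).descFactorial k := by
    have h : n + 1 + k - 1 = n + k := by omega
    simp [ascPochhammer_nat_eq_descFactorial, h]
  rw [Epoly, Polynomial.eval_natCast_map]
  simp only [Nat.cast_id, h1, Nat.descFactorial_eq_factorial_mul_choose (n + k) k]
  push_cast
  ring

/-- Every polynomial of degree at most `d` is a linear combination of the binomial
coefficient sequences `n ↦ (n+i).choose i`, `i = 0, …, d`, with explicit top coefficient. -/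
lemma newton_expand (d : ℕ) : ∀ P : Polynomial ℂ, P.natDegree ≤ d →
    ∃ D : ℕ → ℂ, D d = P.coeff d * d ! ∧
      ∀ n : ℕ, P.eval (n : ℂ) = ∑ i ∈ Finset.range (d + 1), D i * ((n + i).choose i : ℂ) := by
  induction d with
  | zero =>
    intro P hP
    refine ⟨fun _ => P.coeff 0, by simp, fun n => ?_⟩
    conv_lhs => rw [Polynomial.eq_C_of_natDegree_le_zero hP]
    simp
  | succ d ih =>
    intro P hP
    set c := P.coeff (d + 1) with hc
    set Q := P - Polynomial.C c * Epoly (d + 1) with hQ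
    have hQdeg : Q.natDegree ≤ d := by
      rw [Polynomial.natDegree_le_iff_coeff_eq_zero]
      intro m hm
      rw [hQ, Polynomial.coeff_sub, Polynomial.coeff_C_mul]
      by_cases hm1 : m = d + 1
      · subst hm1
        have hE : (Epoly (d + 1)).coeff (d + 1) = 1 := by
          have := (Epoly_monic (d + 1)).coeff_natDegree
          rwa [Epoly_natDegree] at this
        rw [hE, mul_one, ← hc, sub_self]
      · have hdm : d + 1 < m := by omega
        have h1 : P.coeff m = 0 :=
          Polynomial.coeff_eq_zero_of_natDegree_lt (lt_of_le_of_lt hP hdm)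
        have h2 : (Epoly (d + 1)).coeff m = 0 :=
          Polynomial.coeff_eq_zero_of_natDegree_lt (by rw [Epoly_natDegree]; exact hdm)
        rw [h1, h2, mul_zero, sub_zero]
    obtain ⟨D, hDtop, hDeval⟩ := ih Q hQdeg
    refine ⟨fun i => if i = d + 1 then c * (d + 1)! else D i, by simp, fun n => ?_⟩
    have hPQ : P.eval (n : ℂ) = Q.eval (n : ℂ) + c * ((d+1)! * ((n + (d+1)).choose (d+1) : ℂ)) := by
      rw [hQ]
      simp only [Polynomial.eval_sub, Polynomial.eval_mul, Polynomial.eval_C,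
        Epoly_eval (d + 1) n]
      ring
    rw [hPQ, Finset.sum_range_succ, hDeval n]
    have hrest : ∀ i ∈ Finset.range (d + 1),
        (if i = d + 1 then c * (d + 1)! else D i) * ((n + i).choose i : ℂ)
          = D i * ((n + i).choose i : ℂ) := by
      intro i hi
      rw [Finset.mem_range] at hi
      rw [if_neg (by omega)]
    rw [Finset.sum_congr rfl hrest]
    have hbeta : (fun i => if i = d + 1 then c * ((d + 1)! : ℂ) else D i) (d + 1)
        = c * ((d + 1)! : ℂ) := by simp
    rw [hbeta]
    ring

open FormalMultilinearSeries in
/-- Uniqueness of power series coefficients. -/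
lemma hasSum_coeff_unique {f : ℂ → ℂ} {r : ℝ} (hr : 0 < r) {u v : ℕ → ℂ}
    (hu : ∀ ζ : ℂ, ‖ζ‖ < r → HasSum (fun n => u n * ζ ^ n) (f ζ))
    (hv : ∀ ζ : ℂ, ‖ζ‖ < r → HasSum (fun n => v n * ζ ^ n) (f ζ)) : u = v := by
  have key : ∀ w : ℕ → ℂ, (∀ ζ : ℂ, ‖ζ‖ < r → HasSum (fun n => w n * ζ ^ n) (f ζ)) →
      HasFPowerSeriesAt f (ofScalars ℂ w) 0 := by
    intro w hw
    refine ⟨ENNReal.ofReal r, ?_, ENNReal.ofReal_pos.mpr hr, ?_⟩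
    · apply ENNReal.le_of_forall_nnreal_lt
      intro r' hr'
      have hr'r : (r' : ℝ) < r := by
        rw [← ENNReal.ofReal_coe_nnreal] at hr'
        exact (ENNReal.ofReal_lt_ofReal_iff hr).mp hr'
      apply FormalMultilinearSeries.le_radius_of_tendsto (l := 0)
      have hnz : ‖((r' : ℝ) : ℂ)‖ < r := by
        rwa [Complex.norm_real, Real.norm_eq_abs, abs_of_nonneg r'.coe_nonneg]
      have h0 := ((hw _ hnz).summable.tendsto_atTop_zero).norm
      rw [norm_zero] at h0
      have hfun : (fun n => ‖ofScalars ℂ w n‖ * (r' : ℝ) ^ n)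
          = fun n => ‖w n * ((r' : ℝ) : ℂ) ^ n‖ := by
        funext n
        rw [ofScalars_norm, norm_mul, norm_pow, Complex.norm_real, Real.norm_eq_abs,
          abs_of_nonneg r'.coe_nonneg]
      rw [hfun]
      exact h0
    · intro y hy
      rw [EMetric.mem_ball, edist_zero_right, ← ofReal_norm] at hy
      have hyr : ‖y‖ < r := (ENNReal.ofReal_lt_ofReal_iff hr).mp hy
      have := hw y hyr
      rw [zero_add]
      refine this.congr_fun fun n => ?_
      rw [ofScalars_apply_eq, smul_eq_mul, mul_comm]
  have heq : ofScalars ℂ u = ofScalars ℂ v :=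
    (key u hu).eq_formalMultilinearSeries (key v hv)
  exact ofScalars_series_injective ℂ ℂ heq

lemma sum_Icc_one_eq_sum_range (k : ℕ) (f : ℕ → ℂ) :
    ∑ j ∈ Finset.Icc 1 (k + 1), f j = ∑ i ∈ Finset.range (k + 1), f (1 + i) := by
  rw [← Finset.Ico_add_one_right_eq_Icc, Finset.sum_Ico_eq_sum_range]
  norm_num

/-- The Hadamard product of `f₀(ζ) = Σ_{j=1}^M A_j/(1−ζ)^j` (pole of order `M` at `1`) and
`g₀(ζ) = Σ_{k=1}^N B_k/(ω−ζ)^k` (pole of order `N` at `ω`) is a rational function with a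
single pole at `ω`, of order exactly `M+N−1`. -/
theorem stmt6 (ω : ℂ) (hω : ω ≠ 0) (M N : ℕ) (hM : 1 ≤ M) (hN : 1 ≤ N)
    (A B : ℕ → ℂ) (hAM : A M ≠ 0) (hBN : B N ≠ 0)
    (a : ℕ → ℂ)
    (ha : ∀ ζ : ℂ, ‖ζ‖ < 1 →
      HasSum (fun n => a n * ζ ^ n) (∑ j ∈ Finset.Icc 1 M, A j / (1 - ζ) ^ j))
    (b : ℕ → ℂ)
    (hb : ∀ ζ : ℂ, ‖ζ‖ < ‖ω‖ →
      HasSum (fun n => b n * ζ ^ n) (∑ k ∈ Finset.Icc 1 N, B k / (ω - ζ) ^ k)) :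
    ∃ C : ℕ → ℂ, C (M + N - 1) ≠ 0 ∧ ∃ δ > 0, ∀ ζ : ℂ, ‖ζ‖ < δ →
      HasSum (fun n => a n * b n * ζ ^ n)
        (∑ j ∈ Finset.Icc 1 (M + N - 1), C j / (ω - ζ) ^ j) := by
  obtain ⟨m, rfl⟩ : ∃ m, M = m + 1 := ⟨M - 1, by omega⟩
  obtain ⟨l, rfl⟩ : ∃ l, N = l + 1 := ⟨N - 1, by omega⟩
  have hωpos : (0 : ℝ) < ‖ω‖ := norm_pos_iff.mpr hω
  -- a key fraction identity
  have hfrac : ∀ ζ : ℂ, ‖ζ‖ < ‖ω‖ → ∀ i : ℕ,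
      1 / (1 - ζ / ω) ^ (i + 1) = ω ^ (i + 1) / (ω - ζ) ^ (i + 1) := by
    intro ζ hζ i
    have hωζ : ω - ζ ≠ 0 := by
      intro h
      have : ζ = ω := by linear_combination -h
      rw [this] at hζ; exact lt_irrefl _ hζ
    have h1 : 1 - ζ / ω = (ω - ζ) / ω := by field_simp
    rw [h1, div_pow, one_div_div]
  -- explicit coefficients of f₀
  set aF : ℕ → ℂ := fun n => ∑ i ∈ Finset.range (m + 1), A (1 + i) * ((n + i).choose i : ℂ)
    with haF
  have haF_sum : ∀ ζ : ℂ, ‖ζ‖ < 1 →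
      HasSum (fun n => aF n * ζ ^ n) (∑ j ∈ Finset.Icc 1 (m + 1), A j / (1 - ζ) ^ j) := by
    intro ζ hζ
    rw [sum_Icc_one_eq_sum_range]
    have := hasSum_sum (f := fun i n => A (1 + i) * (((n + i).choose i : ℂ) * ζ ^ n))
      (a := fun i => A (1 + i) * (1 / (1 - ζ) ^ (i + 1))) (s := Finset.range (m + 1))
      (fun i _ => (hasSum_choose_mul_geometric_of_norm_lt_one i hζ).mul_left (A (1 + i)))
    convert this using 1
    · funext n
      simp only [haF, Finset.sum_mul]
      exact Finset.sum_congr rfl fun i _ => by ring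
    · exact Finset.sum_congr rfl fun i _ => by
        simp only [mul_one_div, add_comm 1 i]
  have ha_eq : a = aF := hasSum_coeff_unique one_pos ha haF_sum
  -- explicit coefficients of g₀
  set bF : ℕ → ℂ := fun n =>
    (∑ i ∈ Finset.range (l + 1), B (1 + i) * ω⁻¹ ^ (i + 1) * ((n + i).choose i : ℂ)) * ω⁻¹ ^ n
    with hbF
  have hbF_sum : ∀ ζ : ℂ, ‖ζ‖ < ‖ω‖ →
      HasSum (fun n => bF n * ζ ^ n) (∑ k ∈ Finset.Icc 1 (l + 1), B k / (ω - ζ) ^ k) := by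
    intro ζ hζ
    have hw : ‖ζ / ω‖ < 1 := by
      rw [norm_div]; exact (div_lt_one hωpos).mpr hζ
    rw [sum_Icc_one_eq_sum_range]
    have := hasSum_sum
      (f := fun i n => (B (1 + i) * ω⁻¹ ^ (i + 1)) * (((n + i).choose i : ℂ) * (ζ / ω) ^ n))
      (a := fun i => (B (1 + i) * ω⁻¹ ^ (i + 1)) * (1 / (1 - ζ / ω) ^ (i + 1)))
      (s := Finset.range (l + 1))
      (fun i _ => (hasSum_choose_mul_geometric_of_norm_lt_one i hw).mul_left _)
    convert this using 1
    · funext n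
      simp only [hbF, Finset.sum_mul]
      refine Finset.sum_congr rfl fun i _ => ?_
      rw [div_pow, div_eq_mul_inv (ζ ^ n), ← inv_pow]
      ring
    · refine Finset.sum_congr rfl fun i _ => ?_
      have hωζ : ω - ζ ≠ 0 := by
        intro h
        have : ζ = ω := by linear_combination -h
        rw [this] at hζ; exact lt_irrefl _ hζ
      simp only [hfrac ζ hζ i, add_comm 1 i]
      field_simp
      rw [one_div, inv_pow, mul_assoc, inv_mul_cancel₀ (pow_ne_zero _ hω), mul_one]
  have hb_eq : b = bF := hasSum_coeff_unique hωpos hb hbF_sum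
  -- the polynomials
  set p : Polynomial ℂ :=
    ∑ i ∈ Finset.range (m + 1), Polynomial.C (A (1 + i) / i !) * Epoly i with hp
  set q : Polynomial ℂ :=
    ∑ i ∈ Finset.range (l + 1), Polynomial.C (B (1 + i) * ω⁻¹ ^ (i + 1) / i !) * Epoly i with hq
  have hfact : ∀ i : ℕ, (i ! : ℂ) ≠ 0 := fun i =>
    Nat.cast_ne_zero.mpr (Nat.factorial_ne_zero i)
  have hpeval : ∀ n : ℕ, p.eval (n : ℂ) = aF n := by
    intro n
    rw [hp, Polynomial.eval_finset_sum, haF]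
    refine Finset.sum_congr rfl fun i _ => ?_
    rw [Polynomial.eval_mul, Polynomial.eval_C, Epoly_eval i n, div_mul_eq_mul_div,
      show A (1 + i) * ((i ! : ℂ) * ((n + i).choose i : ℂ))
        = (i ! : ℂ) * (A (1 + i) * ((n + i).choose i : ℂ)) from by ring,
      mul_div_cancel_left₀ _ (hfact i)]
  have hqeval : ∀ n : ℕ, q.eval (n : ℂ) =
      ∑ i ∈ Finset.range (l + 1), B (1 + i) * ω⁻¹ ^ (i + 1) * ((n + i).choose i : ℂ) := by
    intro n
    rw [hq, Polynomial.eval_finset_sum]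
    refine Finset.sum_congr rfl fun i _ => ?_
    rw [Polynomial.eval_mul, Polynomial.eval_C, Epoly_eval i n, div_mul_eq_mul_div,
      show B (1 + i) * ω⁻¹ ^ (i + 1) * ((i ! : ℂ) * ((n + i).choose i : ℂ))
        = (i ! : ℂ) * (B (1 + i) * ω⁻¹ ^ (i + 1) * ((n + i).choose i : ℂ)) from by ring,
      mul_div_cancel_left₀ _ (hfact i)]
  -- coefficients and degrees
  have coeff_top : ∀ (k : ℕ) (c : ℕ → ℂ),
      (∑ i ∈ Finset.range (k + 1), Polynomial.C (c i) * Epoly i).coeff k = c k := by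
    intro k c
    rw [Polynomial.finset_sum_coeff]
    rw [Finset.sum_eq_single k]
    · rw [Polynomial.coeff_C_mul]
      have h1 := (Epoly_monic k).coeff_natDegree
      rw [Epoly_natDegree] at h1
      rw [h1, mul_one]
    · intro i hi hik
      rw [Finset.mem_range] at hi
      rw [Polynomial.coeff_C_mul,
        Polynomial.coeff_eq_zero_of_natDegree_lt (by rw [Epoly_natDegree]; omega), mul_zero]
    · intro h
      exact absurd (Finset.self_mem_range_succ k) h
  have deg_le : ∀ (k : ℕ) (c : ℕ → ℂ),
      (∑ i ∈ Finset.range (k + 1), Polynomial.C (c i) * Epoly i).natDegree ≤ k := by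
    intro k c
    apply Polynomial.natDegree_sum_le_of_forall_le
    intro i hi
    rw [Finset.mem_range] at hi
    exact (Polynomial.natDegree_C_mul_le _ _).trans (by rw [Epoly_natDegree]; omega)
  have hpc : p.coeff m = A (m + 1) / m ! := by
    rw [hp, coeff_top m (fun i => A (1 + i) / i !), add_comm 1 m]
  have hqc : q.coeff l = B (l + 1) * ω⁻¹ ^ (l + 1) / l ! := by
    rw [hq, coeff_top l (fun i => B (1 + i) * ω⁻¹ ^ (i + 1) / i !), add_comm 1 l]
  have hpc0 : p.coeff m ≠ 0 := by
    rw [hpc]; exact div_ne_zero hAM (hfact m)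
  have hqc0 : q.coeff l ≠ 0 := by
    rw [hqc]
    exact div_ne_zero (mul_ne_zero hBN (pow_ne_zero _ (inv_ne_zero hω))) (hfact l)
  have hpdeg : p.natDegree = m :=
    le_antisymm (hp ▸ deg_le m _) (Polynomial.le_natDegree_of_ne_zero hpc0)
  have hqdeg : q.natDegree = l :=
    le_antisymm (hq ▸ deg_le l _) (Polynomial.le_natDegree_of_ne_zero hqc0)
  set P : Polynomial ℂ := p * q with hP
  have hp0 : p ≠ 0 := fun h => hpc0 (by rw [h, Polynomial.coeff_zero])
  have hq0 : q ≠ 0 := fun h => hqc0 (by rw [h, Polynomial.coeff_zero])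
  have hPdeg : P.natDegree = m + l := by
    rw [hP, Polynomial.natDegree_mul hp0 hq0, hpdeg, hqdeg]
  have hPc : P.coeff (m + l) ≠ 0 := by
    have : P.coeff (m + l) = p.coeff m * q.coeff l := by
      have := Polynomial.coeff_mul_degree_add_degree p q
      rwa [hpdeg, hqdeg, Polynomial.leadingCoeff, Polynomial.leadingCoeff, hpdeg, hqdeg] at this
    rw [this]
    exact mul_ne_zero hpc0 hqc0
  obtain ⟨D, hDtop, hDeval⟩ := newton_expand (m + l) P (le_of_eq hPdeg)
  have hD0 : D (m + l) ≠ 0 := by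
    rw [hDtop]
    exact mul_ne_zero hPc (hfact (m + l))
  refine ⟨fun j => D (j - 1) * ω ^ j, ?_, ‖ω‖, hωpos, ?_⟩
  · have : m + 1 + (l + 1) - 1 = m + l + 1 := by omega
    rw [this]
    simp only [Nat.add_sub_cancel]
    exact mul_ne_zero hD0 (pow_ne_zero _ hω)
  · intro ζ hζ
    have hw : ‖ζ / ω‖ < 1 := by
      rw [norm_div]; exact (div_lt_one hωpos).mpr hζ
    have hKey := hasSum_sum
      (f := fun i n => D i * (((n + i).choose i : ℂ) * (ζ / ω) ^ n))
      (a := fun i => D i * (1 / (1 - ζ / ω) ^ (i + 1)))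
      (s := Finset.range (m + l + 1))
      (fun i _ => (hasSum_choose_mul_geometric_of_norm_lt_one i hw).mul_left _)
    have hMN : m + 1 + (l + 1) - 1 = m + l + 1 := by omega
    rw [hMN, sum_Icc_one_eq_sum_range]
    convert hKey using 1
    · funext n
      rw [ha_eq, hb_eq]
      have h1 : aF n * bF n = P.eval (n : ℂ) * ω⁻¹ ^ n := by
        rw [hP, Polynomial.eval_mul, hpeval n, hbF, hqeval n]
        ring
      rw [h1, hDeval n, Finset.sum_mul, Finset.sum_mul]
      refine Finset.sum_congr rfl fun i _ => ?_
      simp only [div_eq_mul_inv, mul_pow]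
      ring
    · refine Finset.sum_congr rfl fun i _ => ?_
      simp only [hfrac ζ hζ i, add_comm 1 i, Nat.add_sub_cancel, mul_div_assoc]
end

section
/- Fix ε, r ∈ (0,1), M ≥ 1 and A_1, …, A_M ∈ ℂ with A_M ≠ 0. Let f₀(ζ) = Σ_{j=1}^M A_j/(1−ζ)^j, with Taylor coefficients (a_n)_{n≥0} at 0. Let U = {ζ ∈ ℂ : |ζ| < 1+ε} ∖ [1, 1+ε) and let g : U → ℂ be holomorphic, with Taylor coefficients (b_n)_{n≥0} at 0, and suppose there exist functions g₁, g₂ holomorphic on the disk D(1,r) such that g(ζ) = g₁(ζ)·log(1−ζ)/(2πi) + g₂(ζ) for all ζ ∈ D(1,r) with ζ ∉ [1,∞). Then the Hadamard product series h(ζ) = Σ_{n≥0} a_n b_n ζ^n converges for |ζ| < 1, and lim_{ζ→1⁻, ζ∈(0,1)} (ζ−1)^M · h(ζ) = 0. -/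
open Metric Complex Filter
open scoped ENNReal NNReal Real

lemma stmt7_coeff_bound {c : ℕ → ℂ} {F : ℂ → ℂ}
    (h : ∀ ζ : ℂ, ‖ζ‖ < 1 → HasSum (fun n => c n * ζ ^ n) (F ζ))
    {ρ : ℝ} (hρ0 : 0 ≤ ρ) (hρ : ρ < 1) :
    ∃ K, 0 ≤ K ∧ ∀ n, ‖c n‖ * ρ ^ n ≤ K := by
  have hnorm : ‖(ρ : ℂ)‖ < 1 := by
    rw [Complex.norm_real, Real.norm_eq_abs, _root_.abs_of_nonneg hρ0]; exact hρ
  have hs := (h ρ hnorm).summable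
  have h0 : Filter.Tendsto (fun n => ‖c n * (ρ:ℂ) ^ n‖) atTop (nhds 0) := by
    simpa using hs.tendsto_atTop_zero.norm
  obtain ⟨K, hK⟩ := h0.bddAbove_range
  refine ⟨K, le_trans (norm_nonneg _) (hK ⟨0, rfl⟩), fun n => ?_⟩
  have := hK ⟨n, rfl⟩
  simpa [norm_mul, norm_pow, Complex.norm_real, Real.norm_eq_abs,
    _root_.abs_of_nonneg hρ0] using this

/-- Termwise differentiation of a power series on the unit ball. -/
lemma stmt7_hasSum_deriv {c : ℕ → ℂ} {F : ℂ → ℂ}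
    (h : ∀ ζ : ℂ, ‖ζ‖ < 1 → HasSum (fun n => c n * ζ ^ n) (F ζ))
    (ζ : ℂ) (hζ : ‖ζ‖ < 1) :
    HasSum (fun n : ℕ => (n : ℂ) * c n * ζ ^ (n - 1)) (deriv F ζ) := by
  set ρ : ℝ := (1 + ‖ζ‖) / 2 with hρdef
  have hζρ : ‖ζ‖ < ρ := by rw [hρdef]; linarith
  have hρ1 : ρ < 1 := by rw [hρdef]; linarith [norm_nonneg ζ]
  have hρ0 : 0 < ρ := lt_of_le_of_lt (norm_nonneg ζ) hζρ
  set σ : ℝ := (1 + ρ) / 2 with hσdef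
  have hρσ : ρ < σ := by rw [hσdef]; linarith
  have hσ1 : σ < 1 := by rw [hσdef]; linarith
  have hσ0 : 0 < σ := lt_trans hρ0 hρσ
  obtain ⟨K, hK0, hK⟩ := stmt7_coeff_bound h hσ0.le hσ1
  set u : ℕ → ℝ := fun n => K / ρ * ((n : ℝ) * (ρ / σ) ^ n) with hudef
  have hu : Summable u := by
    apply Summable.mul_left
    have hρσ' : ‖ρ / σ‖ < 1 := by
      rw [Real.norm_eq_abs, abs_of_pos (div_pos hρ0 hσ0)]
      rw [div_lt_one hσ0]; exact hρσ
    simpa using summable_pow_mul_geometric_of_norm_lt_one 1 hρσ'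
  have key := hasDerivAt_tsum_of_isPreconnected hu
    (Metric.isOpen_ball (x := (0:ℂ)) (ε := ρ))
    ((convex_ball (0:ℂ) ρ).isPreconnected)
    (g := fun n y => c n * y ^ n) (g' := fun n y => (n : ℂ) * c n * y ^ (n - 1))
    (y₀ := 0) (y := ζ) ?_ ?_ ?_ ?_ ?_
  · -- now relate deriv F to this
    have hsum' : Summable fun n : ℕ => (n : ℂ) * c n * ζ ^ (n - 1) := by
      apply Summable.of_norm_bounded hu
      intro n
      rcases Nat.eq_zero_or_pos n with rfl | hn
      · simp [hudef]
      · have h1 : ‖(n : ℂ) * c n * ζ ^ (n - 1)‖ = (n : ℝ) * ‖c n‖ * ‖ζ‖ ^ (n - 1) := by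
          simp [norm_mul, norm_pow]
        rw [h1, hudef]
        have h2 : ‖ζ‖ ^ (n - 1) ≤ ρ ^ (n - 1) :=
          pow_le_pow_left₀ (norm_nonneg ζ) hζρ.le _
        have h3 : ‖c n‖ ≤ K / σ ^ n := by
          rw [le_div_iff₀ (pow_pos hσ0 n)]; exact hK n
        calc (n : ℝ) * ‖c n‖ * ‖ζ‖ ^ (n - 1)
            ≤ (n : ℝ) * (K / σ ^ n) * ρ ^ (n - 1) := by
              apply mul_le_mul (mul_le_mul_of_nonneg_left h3 (Nat.cast_nonneg n)) h2
                (pow_nonneg (norm_nonneg ζ) _) (by positivity)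
          _ = K / ρ * ((n : ℝ) * (ρ / σ) ^ n) := by
              have : ρ ^ (n-1) = ρ ^ n / ρ := by
                rw [eq_div_iff hρ0.ne', ← pow_succ]
                congr 1; omega
              rw [this]; ring
    have hF : deriv F ζ = ∑' n : ℕ, (n : ℂ) * c n * ζ ^ (n - 1) := by
      have hEq : F =ᶠ[nhds ζ] (fun z => ∑' n, c n * z ^ n) := by
        filter_upwards [Metric.ball_mem_nhds ζ (by linarith : (0:ℝ) < 1 - ‖ζ‖)] with z hz
        have hz1 : ‖z‖ < 1 := by
          have := mem_ball_iff_norm.mp hz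
          calc ‖z‖ ≤ ‖z - ζ‖ + ‖ζ‖ := by simpa using norm_add_le (z - ζ) ζ
            _ < 1 := by linarith
        exact ((h z hz1).tsum_eq).symm
      rw [hEq.deriv_eq]
      exact key.deriv
    rw [hF]
    exact hsum'.hasSum
  · intro n y _
    have := (hasDerivAt_pow n y).const_mul (c n)
    show HasDerivAt (fun y => c n * y ^ n) ((n : ℂ) * c n * y ^ (n - 1)) y
    rw [show (n:ℂ) * c n * y ^ (n - 1) = c n * ((n:ℂ) * y ^ (n - 1)) by ring]; exact this
  · intro n y hy
    have hyρ : ‖y‖ < ρ := by simpa [mem_ball_iff_norm] using hy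
    rcases Nat.eq_zero_or_pos n with rfl | hn
    · simp [hudef]
    · have h1 : ‖(n : ℂ) * c n * y ^ (n - 1)‖ = (n : ℝ) * ‖c n‖ * ‖y‖ ^ (n - 1) := by
        simp [norm_mul, norm_pow]
      rw [h1, hudef]
      have h2 : ‖y‖ ^ (n - 1) ≤ ρ ^ (n - 1) := pow_le_pow_left₀ (norm_nonneg y) hyρ.le _
      have h3 : ‖c n‖ ≤ K / σ ^ n := by
        rw [le_div_iff₀ (pow_pos hσ0 n)]; exact hK n
      calc (n : ℝ) * ‖c n‖ * ‖y‖ ^ (n - 1)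
          ≤ (n : ℝ) * (K / σ ^ n) * ρ ^ (n - 1) := by
            apply mul_le_mul (mul_le_mul_of_nonneg_left h3 (Nat.cast_nonneg n)) h2
              (pow_nonneg (norm_nonneg y) _) (by positivity)
        _ = K / ρ * ((n : ℝ) * (ρ / σ) ^ n) := by
            have : ρ ^ (n-1) = ρ ^ n / ρ := by
              rw [eq_div_iff hρ0.ne', ← pow_succ]
              congr 1; omega
            rw [this]; ring
  · simpa using hρ0
  · apply summable_of_ne_finset_zero (s := {0})
    intro n hn
    simp only [Finset.mem_singleton] at hn
    simp [zero_pow hn]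
  · simpa [mem_ball_iff_norm] using hζρ

section
variable {c : ℕ → ℂ} {F : ℂ → ℂ}

set_option maxHeartbeats 1000000 in
lemma stmt7_hasFPowerSeries
    (h : ∀ ζ : ℂ, ‖ζ‖ < 1 → HasSum (fun n => c n * ζ ^ n) (F ζ)) :
    HasFPowerSeriesAt F (FormalMultilinearSeries.ofScalars ℂ c) 0 := by
  have hs : Summable fun n => ‖FormalMultilinearSeries.ofScalars ℂ c n‖ * ((1/2 : NNReal):ℝ)^n := by
    obtain ⟨K, hK0, hK⟩ := stmt7_coeff_bound h (by norm_num : (0:ℝ) ≤ 3/4) (by norm_num)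
    refine Summable.of_nonneg_of_le
      (fun n => by positivity) (fun n => ?_)
      ((summable_geometric_of_lt_one (r := (2/3:ℝ)) (by norm_num) (by norm_num)).mul_left K)
    rw [FormalMultilinearSeries.ofScalars_norm]
    have h2 := hK n
    have h3 : ‖c n‖ * ((1/2 : NNReal) : ℝ) ^ n = (‖c n‖ * (3/4)^n) * (2/3)^n := by
      push_cast
      rw [mul_assoc, ← mul_pow]
      norm_num
    rw [h3]
    exact mul_le_mul_of_nonneg_right h2 (by positivity)
  refine ⟨((1/2 : NNReal) : ℝ≥0∞), ?_, ?_, ?_⟩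
  · exact (FormalMultilinearSeries.ofScalars ℂ c).le_radius_of_summable_norm hs
  · simp
  · intro y hy
    rw [EMetric.mem_ball, edist_zero_right, enorm_eq_nnnorm, ENNReal.coe_lt_coe] at hy
    have hy2 : ‖y‖ < 1 := by
      have := (NNReal.coe_lt_coe).mpr hy
      rw [coe_nnnorm] at this
      calc ‖y‖ < ((1/2 : NNReal) : ℝ) := this
        _ < 1 := by norm_num
    have := h y hy2
    simp only [FormalMultilinearSeries.ofScalars_apply_eq, smul_eq_mul, zero_add]
    exact this

lemma stmt7_coeff_unique {d : ℕ → ℂ}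
    (hc : ∀ ζ : ℂ, ‖ζ‖ < 1 → HasSum (fun n => c n * ζ ^ n) (F ζ))
    (hd : ∀ ζ : ℂ, ‖ζ‖ < 1 → HasSum (fun n => d n * ζ ^ n) (F ζ)) : c = d := by
  have := (stmt7_hasFPowerSeries hc).eq_formalMultilinearSeries (stmt7_hasFPowerSeries hd)
  exact FormalMultilinearSeries.ofScalars_series_injective ℂ ℂ this

end

/-- Iterated "Euler operator"-style sequence of functions. -/
noncomputable def stmt7D (g : ℂ → ℂ) : ℕ → (ℂ → ℂ)
  | 0 => g
  | (k+1) => fun ζ => ((k : ℂ) + 1) * stmt7D g k ζ + ζ * deriv (stmt7D g k) ζ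

lemma stmt7D_hasSum (g : ℂ → ℂ) (b : ℕ → ℂ)
    (hb : ∀ ζ : ℂ, ‖ζ‖ < 1 → HasSum (fun n : ℕ => b n * ζ ^ n) (g ζ)) :
    ∀ k, ∀ ζ : ℂ, ‖ζ‖ < 1 →
      HasSum (fun n : ℕ => ((n + k).descFactorial k : ℂ) * b n * ζ ^ n) (stmt7D g k ζ) := by
  intro k
  induction k with
  | zero => intro ζ hζ; simpa [stmt7D] using hb ζ hζ
  | succ k ih =>
    intro ζ hζ
    have hD := stmt7_hasSum_deriv (c := fun n => ((n + k).descFactorial k : ℂ) * b n)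
      (F := stmt7D g k) ih ζ hζ
    have h1 := (ih ζ hζ).mul_left ((k : ℂ) + 1)
    have h2 := hD.mul_left ζ
    have h3 := h1.add h2
    have heq : (fun n : ℕ => ((k : ℂ) + 1) * (((n + k).descFactorial k : ℂ) * b n * ζ ^ n)
        + ζ * ((n : ℂ) * (((n + k).descFactorial k : ℂ) * b n) * ζ ^ (n - 1)))
        = fun n : ℕ => ((n + (k+1)).descFactorial (k+1) : ℂ) * b n * ζ ^ n := by
      funext n
      have hdf : ((n + (k+1)).descFactorial (k+1) : ℂ)
          = ((n : ℂ) + (k : ℂ) + 1) * ((n + k).descFactorial k : ℂ) := by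
        have : (n + (k+1)).descFactorial (k+1) = (n + k + 1) * (n + k).descFactorial k := by
          exact Nat.succ_descFactorial_succ (n + k) k
        rw [this]
        push_cast
        ring
      rcases Nat.eq_zero_or_pos n with rfl | hn
      · rw [hdf]; norm_num; ring
      · have hpow : ζ * ζ ^ (n - 1) = ζ ^ n := by
          rw [← pow_succ']
          congr 1; omega
        rw [hdf]
        rw [show ζ * ((n : ℂ) * (((n + k).descFactorial k : ℂ) * b n) * ζ ^ (n - 1))
          = (n : ℂ) * (((n + k).descFactorial k : ℂ) * b n) * (ζ * ζ ^ (n-1)) by ring, hpow]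
        ring
    rw [heq] at h3
    simpa [stmt7D] using h3

lemma stmt7D_diffOn {g : ℂ → ℂ} {Ω : Set ℂ} (hΩ : IsOpen Ω)
    (hg : DifferentiableOn ℂ g Ω) : ∀ k, DifferentiableOn ℂ (stmt7D g k) Ω := by
  intro k
  induction k with
  | zero => exact hg
  | succ k ih =>
    have hderiv : DifferentiableOn ℂ (deriv (stmt7D g k)) Ω :=
      ((ih.analyticOnNhd hΩ).deriv).differentiableOn
    exact ((differentiableOn_const _).mul ih).add (differentiableOn_id.mul hderiv)

lemma stmt7_base_bound (r : ℝ) (hr0 : 0 < r) (hr1 : r < 1)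
    (g g₁ g₂ : ℂ → ℂ) (K : ℝ) (hK0 : 0 ≤ K)
    (hK₁ : ∀ z ∈ closedBall (1:ℂ) (3*r/4), ‖g₁ z‖ ≤ K)
    (hK₂ : ∀ z ∈ closedBall (1:ℂ) (3*r/4), ‖g₂ z‖ ≤ K)
    (hrep' : ∀ ζ : ℂ, ‖ζ‖ < 1 → ζ ∈ ball (1:ℂ) r →
      g ζ = g₁ ζ * Complex.log (1 - ζ) / (2 * Real.pi * I) + g₂ ζ) :
    ∀ x ∈ Set.Ioo (1 - min (r/2) (1/2)) 1, ∀ ζ ∈ closedBall ((x:ℂ)) ((1-x)/2),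
      ‖g ζ‖ ≤ (K * (Real.log 2 + Real.pi + 1) + K) * (1 + |Real.log (1-x)|) := by
  intro x hx ζ hζ
  set t : ℝ := 1 - x with htdef
  have hδ : min (r/2) (1/2) ≤ 1/2 := min_le_right _ _
  have hδr : min (r/2) (1/2) ≤ r/2 := min_le_left _ _
  have ht0 : 0 < t := by simp only [htdef]; linarith [hx.2]
  have ht2 : t < min (r/2) (1/2) := by simp only [htdef]; linarith [hx.1]
  have ht12 : t < 1/2 := lt_of_lt_of_le ht2 hδ
  have htr : t < r/2 := lt_of_lt_of_le ht2 hδr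
  have hζx : ‖ζ - (x:ℂ)‖ ≤ t/2 := by
    rw [← dist_eq_norm]; exact mem_closedBall.mp hζ
  have hxnorm : ‖((1:ℂ) - x)‖ = t := by
    rw [show ((1:ℂ) - x) = ((t:ℝ):ℂ) by push_cast [htdef]; ring]
    rw [Complex.norm_real, Real.norm_eq_abs, abs_of_pos ht0]
  have h1ζ_lb : t/2 ≤ ‖1 - ζ‖ := by
    have : (1 : ℂ) - ζ = ((1:ℂ) - x) - (ζ - x) := by ring
    rw [this]
    calc t/2 = t - t/2 := by ring
      _ ≤ ‖((1:ℂ) - x)‖ - ‖ζ - (x:ℂ)‖ := by rw [hxnorm]; linarith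
      _ ≤ ‖((1:ℂ) - x) - (ζ - x)‖ := norm_sub_norm_le _ _
  have h1ζ_ub : ‖1 - ζ‖ ≤ 3*t/2 := by
    have : (1 : ℂ) - ζ = ((1:ℂ) - x) - (ζ - x) := by ring
    rw [this]
    calc ‖((1:ℂ) - x) - (ζ - x)‖ ≤ ‖((1:ℂ) - x)‖ + ‖ζ - (x:ℂ)‖ := norm_sub_le _ _
      _ ≤ t + t/2 := by rw [hxnorm]; linarith
      _ = 3*t/2 := by ring
  have hζ1 : ‖ζ‖ < 1 := by
    have hx0 : 0 < x := by
      have : (1:ℝ)/2 ≤ 1 - min (r/2) (1/2) := by linarith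
      linarith [hx.1]
    calc ‖ζ‖ = ‖(x:ℂ) + (ζ - x)‖ := by ring_nf
      _ ≤ ‖(x:ℂ)‖ + ‖ζ - (x:ℂ)‖ := norm_add_le _ _
      _ ≤ x + t/2 := by
          rw [Complex.norm_real, Real.norm_eq_abs, abs_of_pos hx0]
          linarith
      _ < 1 := by simp only [htdef] at *; linarith
  have hζr : ζ ∈ ball (1:ℂ) r := by
    rw [mem_ball, dist_eq_norm, ← norm_neg]
    have : -(ζ - 1) = 1 - ζ := by ring
    rw [this]
    calc ‖1 - ζ‖ ≤ 3*t/2 := h1ζ_ub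
      _ < r := by linarith
  have hζ34 : ζ ∈ closedBall (1:ℂ) (3*r/4) := by
    rw [mem_closedBall, dist_eq_norm, ← norm_neg]
    have : -(ζ - 1) = 1 - ζ := by ring
    rw [this]
    calc ‖1 - ζ‖ ≤ 3*t/2 := h1ζ_ub
      _ ≤ 3*r/4 := by linarith
  rw [hrep' ζ hζ1 hζr]
  have hlog : ‖Complex.log (1 - ζ)‖ ≤ Real.log 2 + Real.pi + |Real.log t| := by
    have h1 : ‖Complex.log (1 - ζ)‖ ≤ |(Complex.log (1-ζ)).re| + |(Complex.log (1-ζ)).im| := by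
      exact Complex.norm_le_abs_re_add_abs_im _
    have h2 : |(Complex.log (1-ζ)).im| ≤ Real.pi := by
      rw [Complex.log_im]; exact Complex.abs_arg_le_pi _
    have h3 : |(Complex.log (1-ζ)).re| ≤ Real.log 2 + |Real.log t| := by
      rw [Complex.log_re]
      have hub : ‖1-ζ‖ < 1 := by linarith
      have hlb : (0:ℝ) < t/2 := by linarith
      have hlogneg : Real.log ‖1-ζ‖ ≤ 0 :=
        Real.log_nonpos (norm_nonneg _) hub.le
      have hlogt : Real.log t < 0 := Real.log_neg ht0 (by linarith)
      have hmono : Real.log (t/2) ≤ Real.log ‖1-ζ‖ :=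
        Real.log_le_log hlb h1ζ_lb
      have hhalf : Real.log (t/2) = Real.log t - Real.log 2 := by
        rw [Real.log_div ht0.ne' (by norm_num)]
      rw [abs_of_nonpos hlogneg, abs_of_neg hlogt]
      linarith [hmono, hhalf ▸ hmono]
    linarith
  have hg₁b := hK₁ ζ hζ34
  have hg₂b := hK₂ ζ hζ34
  have h2pi : ‖((2:ℂ) * Real.pi * I)‖ = 2 * Real.pi := by
    simp [norm_mul, Complex.norm_real, Real.norm_eq_abs, abs_of_pos Real.pi_pos]
  calc ‖g₁ ζ * Complex.log (1 - ζ) / (2 * ↑Real.pi * I) + g₂ ζ‖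
      ≤ ‖g₁ ζ * Complex.log (1 - ζ) / (2 * ↑Real.pi * I)‖ + ‖g₂ ζ‖ := norm_add_le _ _
    _ = ‖g₁ ζ‖ * ‖Complex.log (1 - ζ)‖ / (2 * Real.pi) + ‖g₂ ζ‖ := by
        rw [norm_div, norm_mul, h2pi]
    _ ≤ ‖g₁ ζ‖ * ‖Complex.log (1 - ζ)‖ + ‖g₂ ζ‖ := by
        have hnum : 0 ≤ ‖g₁ ζ‖ * ‖Complex.log (1 - ζ)‖ := by positivity
        have := div_le_self hnum (by linarith [Real.pi_gt_three] : (1:ℝ) ≤ 2 * Real.pi)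
        linarith
    _ ≤ K * (Real.log 2 + Real.pi + |Real.log t|) + K := by
        have h1 : ‖g₁ ζ‖ * ‖Complex.log (1 - ζ)‖ ≤ K * (Real.log 2 + Real.pi + |Real.log t|) :=
          mul_le_mul hg₁b hlog (norm_nonneg _) hK0
        linarith
    _ ≤ (K * (Real.log 2 + Real.pi + 1) + K) * (1 + |Real.log t|) := by
        have habs : 0 ≤ |Real.log t| := abs_nonneg _
        have hl2 : 0 ≤ Real.log 2 := Real.log_nonneg (by norm_num)
        have hpi : 0 ≤ Real.pi := Real.pi_pos.le
        nlinarith [mul_nonneg hK0 habs]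

lemma stmt7_Dbound (r : ℝ) (hr0 : 0 < r) (hr1 : r < 1) (g : ℂ → ℂ)
    (hg : DifferentiableOn ℂ g (ball (0:ℂ) 1 ∩ ball (1:ℂ) r))
    (C₀ : ℝ) (hC₀ : 0 ≤ C₀)
    (hbase : ∀ x ∈ Set.Ioo (1 - min (r/2) (1/2)) 1, ∀ ζ ∈ closedBall ((x:ℂ)) ((1-x)/2),
      ‖g ζ‖ ≤ C₀ * (1 + |Real.log (1-x)|)) :
    ∀ k, ∃ C, 0 ≤ C ∧ ∀ x ∈ Set.Ioo (1 - min (r/2) (1/2)) 1,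
      ∀ ζ ∈ closedBall ((x:ℂ)) ((1-x)/2^(k+1)),
        ‖stmt7D g k ζ‖ ≤ C * (1 + |Real.log (1-x)|) / (1-x)^k := by
  have hΩopen : IsOpen (ball (0:ℂ) 1 ∩ ball (1:ℂ) r) := isOpen_ball.inter isOpen_ball
  -- preliminary facts about x
  have hfacts : ∀ x ∈ Set.Ioo (1 - min (r/2) (1/2)) 1,
      0 < 1 - x ∧ 1 - x ≤ 1/2 ∧ 1 - x < r/2 ∧ 0 < x := by
    intro x hx
    have hδ : min (r/2) (1/2) ≤ 1/2 := min_le_right _ _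
    have hδr : min (r/2) (1/2) ≤ r/2 := min_le_left _ _
    have h1 : 1 - x < min (r/2) (1/2) := by linarith [hx.1]
    exact ⟨by linarith [hx.2], by linarith, by linarith, by linarith⟩
  -- inclusion of the relevant closed balls into Ω
  have hsubΩ : ∀ x ∈ Set.Ioo (1 - min (r/2) (1/2)) 1,
      closedBall ((x:ℂ)) ((1-x)/2) ⊆ ball (0:ℂ) 1 ∩ ball (1:ℂ) r := by
    intro x hx z hz
    obtain ⟨ht0, ht12, htr, hx0⟩ := hfacts x hx
    have hzx : ‖z - (x:ℂ)‖ ≤ (1-x)/2 := by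
      rw [← dist_eq_norm]; exact mem_closedBall.mp hz
    have hxn : ‖(x:ℂ)‖ = x := by
      rw [Complex.norm_real, Real.norm_eq_abs, abs_of_pos hx0]
    constructor
    · rw [mem_ball_zero_iff]
      calc ‖z‖ = ‖(x:ℂ) + (z - x)‖ := by ring_nf
        _ ≤ ‖(x:ℂ)‖ + ‖z - (x:ℂ)‖ := norm_add_le _ _
        _ ≤ x + (1-x)/2 := by rw [hxn]; linarith
        _ < 1 := by linarith
    · rw [mem_ball, dist_eq_norm]
      have hx1 : ‖(x:ℂ) - 1‖ = 1 - x := by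
        rw [show (x:ℂ) - 1 = -(((1-x:ℝ)):ℂ) by push_cast; ring, norm_neg,
          Complex.norm_real, Real.norm_eq_abs, abs_of_pos ht0]
      calc ‖z - 1‖ = ‖(z - x) + ((x:ℂ) - 1)‖ := by ring_nf
        _ ≤ ‖z - (x:ℂ)‖ + ‖(x:ℂ) - 1‖ := norm_add_le _ _
        _ ≤ (1-x)/2 + (1-x) := by rw [hx1]; linarith
        _ < r := by linarith
  intro k
  induction k with
  | zero =>
    refine ⟨C₀, hC₀, fun x hx ζ hζ => ?_⟩
    simpa [pow_one, stmt7D] using hbase x hx ζ (by simpa [pow_one] using hζ)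
  | succ k ih =>
    obtain ⟨C, hC0, hC⟩ := ih
    refine ⟨(k+1)*C + 2^(k+2)*(2*C+1), by positivity, fun x hx ζ hζ => ?_⟩
    obtain ⟨ht0, ht12, htr, hx0⟩ := hfacts x hx
    set t : ℝ := 1 - x with htdef
    set Λ : ℝ := 1 + |Real.log t| with hΛdef
    have hΛ1 : 1 ≤ Λ := by simp only [hΛdef]; linarith [abs_nonneg (Real.log t)]
    have hΛ0 : 0 < Λ := lt_of_lt_of_le one_pos hΛ1
    have htk1 : t ^ k ≤ 1 := pow_le_one₀ ht0.le (by linarith)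
    have htk1' : t ^ (k+1) ≤ 1 := pow_le_one₀ ht0.le (by linarith)
    set R : ℝ := t/2^(k+2) with hRdef
    have hR0 : 0 < R := by positivity
    have hζx : ‖ζ - (x:ℂ)‖ ≤ R := by
      rw [← dist_eq_norm]; exact mem_closedBall.mp hζ
    -- the ball around ζ of radius R is inside the closed ball of radius t/2^(k+1)
    have hsub : ball ζ R ⊆ closedBall ((x:ℂ)) (t/2^(k+1)) := by
      intro z hz
      rw [mem_closedBall, dist_eq_norm]
      have hzζ : ‖z - ζ‖ < R := by rw [← dist_eq_norm]; exact mem_ball.mp hz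
      calc ‖z - (x:ℂ)‖ = ‖(z - ζ) + (ζ - x)‖ := by ring_nf
        _ ≤ ‖z - ζ‖ + ‖ζ - (x:ℂ)‖ := norm_add_le _ _
        _ ≤ R + R := by linarith
        _ = t/2^(k+1) := by rw [hRdef]; field_simp; ring
    have hsmall : closedBall ((x:ℂ)) (t/2^(k+1)) ⊆ closedBall ((x:ℂ)) (t/2) := by
      apply closedBall_subset_closedBall
      apply div_le_div_of_nonneg_left ht0.le (by norm_num)
      calc (2:ℝ) = 2^1 := (pow_one 2).symm
        _ ≤ 2^(k+1) := pow_le_pow_right₀ (by norm_num) (by omega)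
    have hζmem : ζ ∈ closedBall ((x:ℂ)) (t/2^(k+1)) := by
      apply closedBall_subset_closedBall _ hζ
      apply div_le_div_of_nonneg_left ht0.le (by positivity)
      exact pow_le_pow_right₀ (by norm_num) (by omega)
    have hdball : DifferentiableOn ℂ (stmt7D g k) (ball ζ R) :=
      (stmt7D_diffOn hΩopen hg k).mono
        ((hsub.trans hsmall).trans (hsubΩ x hx))
    set X : ℝ := C * Λ / t^k with hXdef
    have hX0 : 0 ≤ X := by positivity
    have hdζ : ‖stmt7D g k ζ‖ ≤ X := hC x hx ζ hζmem
    have hmaps : Set.MapsTo (stmt7D g k) (ball ζ R) (ball (stmt7D g k ζ) (2*X+1)) := by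
      intro z hz
      rw [mem_ball, dist_eq_norm]
      have hz' : ‖stmt7D g k z‖ ≤ X := hC x hx z (hsub hz)
      calc ‖stmt7D g k z - stmt7D g k ζ‖ ≤ ‖stmt7D g k z‖ + ‖stmt7D g k ζ‖ :=
            norm_sub_le _ _
        _ ≤ 2*X := by linarith
        _ < 2*X+1 := by linarith
    have hderiv : ‖deriv (stmt7D g k) ζ‖ ≤ (2*X+1)/R :=
      Complex.norm_deriv_le_div_of_mapsTo_ball hdball (hmaps.mono_right ball_subset_closedBall) hR0
    have hζ1 : ‖ζ‖ ≤ 1 := by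
      have := ((hsub.trans hsmall).trans (hsubΩ x hx))
      have hζΩ : ζ ∈ ball (0:ℂ) 1 ∩ ball (1:ℂ) r :=
        (hsubΩ x hx) (hsmall hζmem)
      exact (mem_ball_zero_iff.mp hζΩ.1).le
    have hstep : ‖stmt7D g (k+1) ζ‖ ≤ (k+1)*X + (2*X+1)/R := by
      show ‖((k : ℂ) + 1) * stmt7D g k ζ + ζ * deriv (stmt7D g k) ζ‖ ≤ _
      calc ‖((k : ℂ) + 1) * stmt7D g k ζ + ζ * deriv (stmt7D g k) ζ‖
          ≤ ‖((k : ℂ) + 1) * stmt7D g k ζ‖ + ‖ζ * deriv (stmt7D g k) ζ‖ := norm_add_le _ _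
        _ = ‖((k : ℂ) + 1)‖ * ‖stmt7D g k ζ‖ + ‖ζ‖ * ‖deriv (stmt7D g k) ζ‖ := by
            rw [norm_mul, norm_mul]
        _ ≤ (k+1) * X + 1 * ((2*X+1)/R) := by
            have hk1 : ‖((k : ℂ) + 1)‖ = (k:ℝ)+1 := by
              rw [show ((k : ℂ) + 1) = (((k:ℝ)+1 : ℝ) : ℂ) by push_cast; ring]
              rw [Complex.norm_real, Real.norm_eq_abs, abs_of_pos (by positivity)]
            rw [hk1]
            apply add_le_add
            · exact mul_le_mul_of_nonneg_left hdζ (by positivity)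
            · apply mul_le_mul hζ1 hderiv (norm_nonneg _) (by norm_num)
        _ = (k+1)*X + (2*X+1)/R := by ring
    -- final arithmetic
    have e1 : X ≤ C * Λ / t^(k+1) := by
      rw [hXdef]
      apply div_le_div_of_nonneg_left (by positivity) (by positivity)
      calc t^(k+1) = t^k * t := pow_succ t k
        _ ≤ t^k * 1 := by
            apply mul_le_mul_of_nonneg_left (by linarith) (by positivity)
        _ = t^k := mul_one _
    have e2 : (1:ℝ) ≤ Λ / t^k := by
      rw [le_div_iff₀ (by positivity)]
      calc 1 * t^k = t^k := one_mul _
        _ ≤ 1 := htk1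
        _ ≤ Λ := hΛ1
    have e4 : 2*X+1 ≤ (2*C+1)*Λ/t^k := by
      have h5 : 2*(C*Λ/t^k) + Λ/t^k = (2*C+1)*Λ/t^k := by ring
      rw [hXdef]; linarith
    have e3 : (2*X+1)/R ≤ 2^(k+2) * ((2*C+1) * Λ / t^(k+1)) := by
      have h6 : (2*X+1)/R = 2^(k+2)*((2*X+1)/t) := by
        rw [hRdef, div_div_eq_mul_div]; ring
      have h7 : (2*X+1)/t ≤ ((2*C+1)*Λ/t^k)/t :=
        (div_le_div_iff_of_pos_right ht0).mpr e4
      have h8 : ((2*C+1)*Λ/t^k)/t = (2*C+1)*Λ/t^(k+1) := by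
        rw [div_div, ← pow_succ]
      rw [h6]
      calc 2^(k+2)*((2*X+1)/t) ≤ 2^(k+2)*(((2*C+1)*Λ/t^k)/t) := by
            apply mul_le_mul_of_nonneg_left h7 (by positivity)
        _ = 2^(k+2) * ((2*C+1) * Λ / t^(k+1)) := by rw [h8]
    calc ‖stmt7D g (k+1) ζ‖ ≤ (k+1)*X + (2*X+1)/R := hstep
      _ ≤ (k+1)*(C*Λ/t^(k+1)) + 2^(k+2)*((2*C+1)*Λ/t^(k+1)) :=
          add_le_add (mul_le_mul_of_nonneg_left e1 (by positivity)) e3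
      _ = ((k+1)*C + 2^(k+2)*(2*C+1)) * Λ / t^(k+1) := by ring

/-- If `f₀(ζ) = Σ_{j=1}^M A_j/(1−ζ)^j` and `g` has at worst a logarithmic (simple, no pole)
singularity at `1`, then `(ζ−1)^M · (f₀ ⊙ g)(ζ) → 0` as `ζ → 1⁻`. -/
theorem stmt7 (ε r : ℝ) (hε : ε ∈ Set.Ioo (0 : ℝ) 1) (hr : r ∈ Set.Ioo (0 : ℝ) 1)
    (M : ℕ) (hM : 1 ≤ M) (A : ℕ → ℂ) (hAM : A M ≠ 0)
    (a : ℕ → ℂ)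
    (ha : ∀ ζ : ℂ, ‖ζ‖ < 1 →
      HasSum (fun n => a n * ζ ^ n) (∑ j ∈ Finset.Icc 1 M, A j / (1 - ζ) ^ j))
    (U : Set ℂ) (hU : U = ball (0 : ℂ) (1 + ε) \ (Complex.ofReal '' Set.Ico 1 (1 + ε)))
    (g : ℂ → ℂ) (hg : DifferentiableOn ℂ g U)
    (b : ℕ → ℂ) (hb : ∀ ζ : ℂ, ‖ζ‖ < 1 → HasSum (fun n => b n * ζ ^ n) (g ζ))
    (g₁ g₂ : ℂ → ℂ)
    (hg₁ : DifferentiableOn ℂ g₁ (ball (1 : ℂ) r))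
    (hg₂ : DifferentiableOn ℂ g₂ (ball (1 : ℂ) r))
    (hrep : ∀ ζ ∈ ball (1 : ℂ) r, ζ ∈ U → ζ ∉ Complex.ofReal '' Set.Ici 1 →
      g ζ = g₁ ζ * Complex.log (1 - ζ) / (2 * Real.pi * I) + g₂ ζ) :
    (∀ ζ : ℂ, ‖ζ‖ < 1 → Summable (fun n => a n * b n * ζ ^ n)) ∧
    Tendsto (fun x : ℝ => ((x : ℂ) - 1) ^ M * ∑' n, a n * b n * (x : ℂ) ^ n)
      (nhdsWithin 1 (Set.Ioo (0 : ℝ) 1)) (nhds 0) := by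
  obtain ⟨hε0, hε1⟩ := hε
  obtain ⟨hr0, hr1⟩ := hr
  have part1 : ∀ ζ : ℂ, ‖ζ‖ < 1 → Summable (fun n => a n * b n * ζ ^ n) := by
    intro ζ hζ
    set s : ℝ := (1 + ‖ζ‖)/2 with hsdef
    have hs0 : 0 < s := by positivity
    have hs1 : s < 1 := by rw [hsdef]; linarith
    have hsζ : ‖ζ‖ < s := by rw [hsdef]; linarith [norm_nonneg ζ]
    set ρ : ℝ := Real.sqrt s with hρdef
    have hρ0 : 0 ≤ ρ := Real.sqrt_nonneg _
    have hρ1 : ρ < 1 := by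
      rw [hρdef]
      calc Real.sqrt s < Real.sqrt 1 := Real.sqrt_lt_sqrt hs0.le hs1
        _ = 1 := Real.sqrt_one
    have hρρ : ρ * ρ = s := Real.mul_self_sqrt hs0.le
    obtain ⟨K₁, hK₁0, hK₁⟩ := stmt7_coeff_bound ha hρ0 hρ1
    obtain ⟨K₂, hK₂0, hK₂⟩ := stmt7_coeff_bound hb hρ0 hρ1
    apply Summable.of_norm_bounded (g := fun n => K₁ * K₂ * (‖ζ‖/s)^n)
    · apply Summable.mul_left
      apply summable_geometric_of_lt_one (by positivity)
      rw [div_lt_one hs0]; exact hsζ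
    · intro n
      have hkey : ‖ζ‖^n = (ρ^n * ρ^n) * (‖ζ‖/s)^n := by
        rw [← mul_pow, ← mul_pow, hρρ]
        congr 1
        field_simp
      calc ‖a n * b n * ζ^n‖ = ‖a n‖ * ‖b n‖ * ‖ζ‖^n := by
            rw [norm_mul, norm_mul, norm_pow]
        _ = (‖a n‖ * ρ^n) * (‖b n‖ * ρ^n) * (‖ζ‖/s)^n := by rw [hkey]; ring
        _ ≤ (K₁ * K₂) * (‖ζ‖/s)^n := by
            apply mul_le_mul_of_nonneg_right _ (by positivity)
            exact mul_le_mul (hK₁ n) (hK₂ n) (by positivity) hK₁0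
        _ = K₁ * K₂ * (‖ζ‖/s)^n := by ring
  refine ⟨part1, ?_⟩
  -- identify the coefficients of f₀
  have hacoeff : a = fun n => ∑ j ∈ Finset.Icc 1 M, A j * (((n + (j-1)).choose (j-1) : ℕ) : ℂ) := by
    apply stmt7_coeff_unique (F := fun ζ => ∑ j ∈ Finset.Icc 1 M, A j / (1-ζ)^j) ha
    intro ζ hζ
    have hterm : ∀ j ∈ Finset.Icc 1 M,
        HasSum (fun n : ℕ => A j * (((n + (j-1)).choose (j-1) : ℕ) : ℂ) * ζ^n) (A j / (1-ζ)^j) := by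
      intro j hj
      have hj1 : 1 ≤ j := (Finset.mem_Icc.mp hj).1
      have h := (hasSum_choose_mul_geometric_of_norm_lt_one (j-1) hζ).mul_left (A j)
      have hjj : j - 1 + 1 = j := by omega
      rw [hjj] at h
      have e1 : (fun n : ℕ => A j * (((n + (j-1)).choose (j-1) : ℕ) : ℂ) * ζ^n)
          = fun i => A j * ((((i + (j-1)).choose (j-1) : ℕ) : ℂ) * ζ^i) := by funext n; ring
      rw [e1, div_eq_mul_one_div]; exact h
    have hout := hasSum_sum hterm
    convert hout using 1
    funext n
    rw [Finset.sum_mul]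
  -- the representation of g near 1 (for points of norm < 1)
  have hrep' : ∀ ζ : ℂ, ‖ζ‖ < 1 → ζ ∈ ball (1:ℂ) r →
      g ζ = g₁ ζ * Complex.log (1 - ζ) / (2 * Real.pi * I) + g₂ ζ := by
    intro ζ h1 h2
    apply hrep ζ h2
    · rw [hU]
      constructor
      · rw [mem_ball_zero_iff]; linarith
      · rintro ⟨y, hy, rfl⟩
        have : (1:ℝ) ≤ ‖(y:ℂ)‖ := by
          rw [Complex.norm_real, Real.norm_eq_abs]
          exact le_trans hy.1 (le_abs_self y)
        linarith
    · rintro ⟨y, hy, rfl⟩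
      have : (1:ℝ) ≤ ‖(y:ℂ)‖ := by
        rw [Complex.norm_real, Real.norm_eq_abs]
        exact le_trans hy (le_abs_self y)
      linarith
  -- bounds for g₁ and g₂ near 1
  have hcompact : IsCompact (closedBall (1:ℂ) (3*r/4)) := isCompact_closedBall _ _
  have hsub34 : closedBall (1:ℂ) (3*r/4) ⊆ ball (1:ℂ) r := closedBall_subset_ball (by linarith)
  obtain ⟨K₁, hK₁⟩ := hcompact.exists_bound_of_continuousOn (hg₁.continuousOn.mono hsub34)
  obtain ⟨K₂, hK₂⟩ := hcompact.exists_bound_of_continuousOn (hg₂.continuousOn.mono hsub34)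
  set K : ℝ := max (max K₁ K₂) 0 with hKdef
  have hK0 : 0 ≤ K := le_max_right _ _
  have hbase := stmt7_base_bound r hr0 hr1 g g₁ g₂ K hK0
    (fun z hz => le_trans (hK₁ z hz) (le_trans (le_max_left _ _) (le_max_left _ _)))
    (fun z hz => le_trans (hK₂ z hz) (le_trans (le_max_right _ _) (le_max_left _ _)))
    hrep'
  have hΩU : ball (0:ℂ) 1 ∩ ball (1:ℂ) r ⊆ U := by
    intro z hz
    rw [hU]
    constructor
    · have := mem_ball_zero_iff.mp hz.1
      rw [mem_ball_zero_iff]; linarith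
    · rintro ⟨y, hy, rfl⟩
      have h1 : (1:ℝ) ≤ ‖(y:ℂ)‖ := by
        rw [Complex.norm_real, Real.norm_eq_abs]
        exact le_trans hy.1 (le_abs_self y)
      have := mem_ball_zero_iff.mp hz.1
      linarith
  have hgΩ : DifferentiableOn ℂ g (ball (0:ℂ) 1 ∩ ball (1:ℂ) r) := hg.mono hΩU
  set C₀ : ℝ := K * (Real.log 2 + Real.pi + 1) + K with hC₀def
  have hC₀0 : 0 ≤ C₀ := by
    have hl2 : 0 ≤ Real.log 2 := Real.log_nonneg (by norm_num)
    have hpi : 0 ≤ Real.pi := Real.pi_pos.le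
    have : 0 ≤ K * (Real.log 2 + Real.pi + 1) := mul_nonneg hK0 (by linarith)
    rw [hC₀def]; linarith
  choose C hC0 hC using stmt7_Dbound r hr0 hr1 g hgΩ C₀ hC₀0 hbase
  set x₀ : ℝ := 1 - min (r/2) (1/2) with hx₀def
  have hx₀1 : x₀ < 1 := by
    rw [hx₀def]
    have : 0 < min (r/2) (1/2) := lt_min (by linarith) (by norm_num)
    linarith
  set Λ : ℝ → ℝ := fun x => 1 + |Real.log (1-x)| with hΛdef
  set CC : ℝ := ∑ j ∈ Finset.Icc 1 M, ‖A j / ((j-1).factorial : ℂ)‖ * C (j-1) with hCCdef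
  have hCC0 : 0 ≤ CC := Finset.sum_nonneg fun j _ => mul_nonneg (norm_nonneg _) (hC0 _)
  -- eventual bound
  have hev : ∀ᶠ x : ℝ in nhdsWithin (1:ℝ) (Set.Ioo 0 1),
      ‖((x:ℂ) - 1) ^ M * ∑' n, a n * b n * (x:ℂ) ^ n‖ ≤ CC * ((1-x) * Λ x) := by
    filter_upwards [self_mem_nhdsWithin,
      eventually_nhdsWithin_of_eventually_nhds (eventually_gt_nhds hx₀1)] with x hx hxx₀
    have hx01 : 0 < x := hx.1
    have hx1 : x < 1 := hx.2
    have hxI : x ∈ Set.Ioo x₀ 1 := ⟨hxx₀, hx1⟩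
    have ht0 : 0 < 1 - x := by linarith
    have hΛpos : 0 < Λ x := by
      simp only [hΛdef]
      positivity
    have hxn : ‖(x:ℂ)‖ < 1 := by
      rw [Complex.norm_real, Real.norm_eq_abs, abs_of_pos hx01]; exact hx1
    have hsumval : HasSum (fun n : ℕ => a n * b n * (x:ℂ)^n)
        (∑ j ∈ Finset.Icc 1 M, A j / ((j-1).factorial : ℂ) * stmt7D g (j-1) x) := by
      have hterm := fun (j : ℕ) (_ : j ∈ Finset.Icc 1 M) =>
        (stmt7D_hasSum g b hb (j-1) (x:ℂ) hxn).mul_left (A j / ((j-1).factorial : ℂ))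
      have hout := hasSum_sum hterm
      convert hout using 1
      · rfl
      funext n
      rw [hacoeff]
      simp only
      rw [Finset.sum_mul, Finset.sum_mul]
      apply Finset.sum_congr rfl
      intro j hj
      have hdc : ((n + (j-1)).descFactorial (j-1) : ℕ)
          = (j-1).factorial * ((n + (j-1)).choose (j-1)) :=
        Nat.descFactorial_eq_factorial_mul_choose _ _
      have hfac : (((j-1).factorial : ℕ) : ℂ) ≠ 0 :=
        Nat.cast_ne_zero.mpr (Nat.factorial_ne_zero _)
      rw [hdc]
      push_cast
      field_simp
    rw [hsumval.tsum_eq]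
    have hxm : ‖((x:ℂ) - 1)^M‖ = (1-x)^M := by
      rw [norm_pow]
      congr 1
      rw [show (x:ℂ) - 1 = -(((1 - x : ℝ)):ℂ) by push_cast; ring, norm_neg,
        Complex.norm_real, Real.norm_eq_abs, abs_of_pos ht0]
    rw [norm_mul, hxm]
    have hterm_bound : ∀ j ∈ Finset.Icc 1 M,
        ‖A j / ((j-1).factorial : ℂ) * stmt7D g (j-1) x‖
          ≤ ‖A j / ((j-1).factorial : ℂ)‖ * (C (j-1) * Λ x / (1-x)^(j-1)) := by
      intro j hj
      rw [norm_mul]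
      apply mul_le_mul_of_nonneg_left _ (norm_nonneg _)
      have hxmem : (x:ℂ) ∈ closedBall ((x:ℂ)) ((1-x)/2^((j-1)+1)) :=
        mem_closedBall_self (by positivity)
      exact hC (j-1) x hxI (x:ℂ) hxmem
    calc (1-x)^M * ‖∑ j ∈ Finset.Icc 1 M, A j / ((j-1).factorial : ℂ) * stmt7D g (j-1) x‖
        ≤ (1-x)^M * ∑ j ∈ Finset.Icc 1 M,
            ‖A j / ((j-1).factorial : ℂ)‖ * (C (j-1) * Λ x / (1-x)^(j-1)) := by
          apply mul_le_mul_of_nonneg_left _ (by positivity)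
          exact le_trans (norm_sum_le _ _) (Finset.sum_le_sum hterm_bound)
      _ = ∑ j ∈ Finset.Icc 1 M, (1-x)^M *
            (‖A j / ((j-1).factorial : ℂ)‖ * (C (j-1) * Λ x / (1-x)^(j-1))) :=
          Finset.mul_sum _ _ _
      _ ≤ ∑ j ∈ Finset.Icc 1 M,
            (‖A j / ((j-1).factorial : ℂ)‖ * C (j-1)) * ((1-x) * Λ x) := by
          apply Finset.sum_le_sum
          intro j hj
          obtain ⟨hj1, hjM⟩ := Finset.mem_Icc.mp hj
          have hsplit : (1-x)^M = (1-x)^(j-1) * (1-x)^(M-(j-1)) := by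
            rw [← pow_add]; congr 1; omega
          have hred : (1-x)^M / (1-x)^(j-1) = (1-x)^(M-(j-1)) := by
            rw [hsplit]
            field_simp
          have hpow1 : (1-x)^(M-(j-1)) ≤ (1-x) := by
            calc (1-x)^(M-(j-1)) ≤ (1-x)^1 :=
                  pow_le_pow_of_le_one ht0.le (by linarith) (by omega)
              _ = 1-x := pow_one _
          have hrw : (1-x)^M * (‖A j / ((j-1).factorial : ℂ)‖ * (C (j-1) * Λ x / (1-x)^(j-1)))
              = (‖A j / ((j-1).factorial : ℂ)‖ * C (j-1)) * (Λ x * ((1-x)^M/(1-x)^(j-1))) := by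
            ring
          rw [hrw, hred]
          calc (‖A j / ((j-1).factorial : ℂ)‖ * C (j-1)) * (Λ x * (1-x)^(M-(j-1)))
              ≤ (‖A j / ((j-1).factorial : ℂ)‖ * C (j-1)) * (Λ x * (1-x)) := by
                apply mul_le_mul_of_nonneg_left
                  (mul_le_mul_of_nonneg_left hpow1 hΛpos.le)
                  (mul_nonneg (norm_nonneg _) (hC0 _))
            _ = (‖A j / ((j-1).factorial : ℂ)‖ * C (j-1)) * ((1-x) * Λ x) := by ring
      _ = CC * ((1-x) * Λ x) := by rw [hCCdef, Finset.sum_mul]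
  have hten : Tendsto (fun x : ℝ => CC * ((1-x) * Λ x)) (nhdsWithin 1 (Set.Ioo 0 1)) (nhds 0) := by
    have h1 : Tendsto (fun x : ℝ => 1 - x) (nhdsWithin 1 (Set.Ioo 0 1)) (nhdsWithin 0 (Set.Ioi 0)) := by
      apply tendsto_nhdsWithin_of_tendsto_nhds_of_eventually_within
      · have hcont : Tendsto (fun x : ℝ => 1 - x) (nhds 1) (nhds 0) := by
          have h := (continuous_sub_left (1:ℝ)).tendsto 1
          simpa using h
        exact hcont.mono_left nhdsWithin_le_nhds
      · filter_upwards [self_mem_nhdsWithin] with x hx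
        exact Set.mem_Ioi.mpr (by linarith [hx.2])
    have h2 : Tendsto (fun t : ℝ => t * (1 + |Real.log t|)) (nhdsWithin 0 (Set.Ioi 0)) (nhds 0) := by
      have habs : Tendsto (fun t : ℝ => |Real.log t * t ^ (1:ℝ)|) (nhdsWithin 0 (Set.Ioi 0)) (nhds 0) := by
        have := (tendsto_log_mul_rpow_nhdsGT_zero one_pos).abs
        simpa using this
      have hid : Tendsto (fun t : ℝ => t) (nhdsWithin 0 (Set.Ioi 0)) (nhds 0) :=
        tendsto_id.mono_left nhdsWithin_le_nhds
      have hsum := hid.add habs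
      rw [add_zero] at hsum
      apply hsum.congr'
      filter_upwards [self_mem_nhdsWithin] with t ht
      have ht0 : 0 < t := ht
      rw [Real.rpow_one, abs_mul, abs_of_pos ht0]
      ring
    have hcomp := h2.comp h1
    have : Tendsto (fun x : ℝ => (1-x) * Λ x) (nhdsWithin 1 (Set.Ioo 0 1)) (nhds 0) := by
      apply hcomp.congr
      intro x
      simp only [Function.comp_apply, hΛdef]
    simpa using this.const_mul CC
  exact squeeze_zero_norm' hev (by simpa using hten)
end

section
/- Fix ε, r ∈ (0,1). Let f₁ : ℂ → ℂ be entire and let F(ζ) = f₁(ζ)·log(1−ζ)/(2πi), holomorphic on the unit disk {|ζ| < 1}, with Taylor coefficients (a_n)_{n≥0} at 0. Let U = {ζ ∈ ℂ : |ζ| < 1+ε} ∖ [1, 1+ε) and let g : U → ℂ be holomorphic, with Taylor coefficients (b_n)_{n≥0} at 0, and suppose there exist functions g₁, g₂ holomorphic on the disk D(1,r) such that g(ζ) = g₁(ζ)·log(1−ζ)/(2πi) + g₂(ζ) for all ζ ∈ D(1,r) with ζ ∉ [1,∞). Then the Hadamard product series h(ζ) = Σ_{n≥0} a_n b_n ζ^n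 converges for |ζ| < 1, and lim_{ζ→1⁻, ζ∈(0,1)} (1−ζ) · h(ζ) = 0. -/
open Metric Complex Filter MeasureTheory Set

noncomputable section

/-- |log t| ≤ |log s| + log 2 when 0<s≤1, s≤t≤2 -/
private lemma aux_log_abs {s t : ℝ} (hs : 0 < s) (hs1 : s ≤ 1) (hst : s ≤ t) (ht : t ≤ 2) :
    |Real.log t| ≤ |Real.log s| + Real.log 2 := by
  have ht0 : 0 < t := lt_of_lt_of_le hs hst
  rcases le_or_gt t 1 with h1 | h1
  · have h2 : Real.log t ≤ 0 := Real.log_nonpos ht0.le h1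
    have h3 : Real.log s ≤ Real.log t := Real.log_le_log hs hst
    have h4 : Real.log s ≤ 0 := Real.log_nonpos hs.le hs1
    rw [abs_of_nonpos h2, abs_of_nonpos h4]
    have := Real.log_nonneg (by norm_num : (1:ℝ) ≤ 2)
    linarith
  · have h2 : 0 ≤ Real.log t := Real.log_nonneg h1.le
    rw [_root_.abs_of_nonneg h2]
    have h3 : Real.log t ≤ Real.log 2 := Real.log_le_log ht0 ht
    have := abs_nonneg (Real.log s)
    linarith

private lemma aux_norm_clog (w : ℂ) : ‖Complex.log w‖ ≤ |Real.log ‖w‖| + Real.pi := by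
  have h1 : ‖Complex.log w‖ ≤ |(Complex.log w).re| + |(Complex.log w).im| :=
    Complex.norm_le_abs_re_add_abs_im _
  refine h1.trans ?_
  rw [Complex.log_re, Complex.log_im]
  exact add_le_add le_rfl (Complex.abs_arg_le_pi w)

private lemma coeff_bound {c : ℕ → ℂ} {S : ℂ} {ρ : ℝ} (hρ : 0 ≤ ρ)
    (h : HasSum (fun n => c n * (ρ : ℂ) ^ n) S) :
    ∃ K : ℝ, 0 ≤ K ∧ ∀ n, ‖c n‖ * ρ ^ n ≤ K := by
  have h0 : Tendsto (fun n => ‖c n * (ρ : ℂ) ^ n‖) atTop (nhds 0) := by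
    simpa using (h.summable.tendsto_atTop_zero).norm
  obtain ⟨K, hK⟩ := h0.bddAbove_range
  refine ⟨K, le_trans (norm_nonneg _) (hK ⟨0, rfl⟩), fun n => ?_⟩
  have := hK ⟨n, rfl⟩
  simp only at this
  rwa [norm_mul, norm_pow, Complex.norm_real, Real.norm_of_nonneg hρ] at this

private lemma summable_aux {c : ℕ → ℂ} {K ρ' : ℝ} (hρ0 : 0 < ρ')
    (h : ∀ n, ‖c n‖ * ρ' ^ n ≤ K) {τ : ℝ} (hτ0 : 0 ≤ τ) (hτ : τ < ρ') :
    Summable (fun n => ‖c n‖ * τ ^ n) := by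
  have hsum : Summable (fun n : ℕ => K * (τ / ρ') ^ n) :=
    (summable_geometric_of_lt_one (by positivity) (by rwa [div_lt_one hρ0])).mul_left K
  refine hsum.of_nonneg_of_le (fun n => by positivity) (fun n => ?_)
  have h1 : ‖c n‖ * τ ^ n = (‖c n‖ * ρ' ^ n) * (τ / ρ') ^ n := by
    rw [mul_assoc, ← mul_pow, mul_div_assoc', mul_comm ρ' τ, mul_div_assoc, div_self hρ0.ne', mul_one]
  rw [h1]
  exact mul_le_mul_of_nonneg_right (h n) (by positivity)

private lemma aux_core {w : ℂ} {s : ℝ} (hs : 0 < s) (hs1 : s ≤ 1)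
    (h1 : s ≤ ‖w‖) (h2 : ‖w‖ ≤ 2) :
    ‖Complex.log w‖ ≤ |Real.log s| + (Real.log 2 + Real.pi) := by
  have hA := aux_norm_clog w
  have hB := aux_log_abs hs hs1 h1 h2
  linarith

private lemma aux_norm_2piI : ‖(2 * (Real.pi : ℂ) * I)‖ = 2 * Real.pi := by
  simp [_root_.abs_of_nonneg Real.pi_pos.le]

private lemma aux_quot (u v : ℂ) :
    ‖u * v / (2 * (Real.pi : ℂ) * I)‖ = ‖u‖ * ‖v‖ / (2 * Real.pi) := by
  rw [norm_div, norm_mul, aux_norm_2piI]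

/-- bound for the `1-ζ` quantities -/
private lemma aux_dist {ζ : ℂ} (hζ : ‖ζ‖ < 1) :
    0 < 1 - ‖ζ‖ ∧ 1 - ‖ζ‖ ≤ 1 ∧ 1 - ‖ζ‖ ≤ ‖1 - ζ‖ ∧ ‖1 - ζ‖ ≤ 2 := by
  have h0 : (0:ℝ) ≤ ‖ζ‖ := norm_nonneg _
  refine ⟨by linarith, by linarith, ?_, ?_⟩
  · have := norm_sub_norm_le (1 : ℂ) ζ
    simpa using this
  · have := norm_sub_le (1 : ℂ) ζ
    simp only [norm_one] at this
    linarith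

private lemma F_bound {f₁ : ℂ → ℂ} (hf₁ : Differentiable ℂ f₁) :
    ∃ C : ℝ, 0 ≤ C ∧ ∀ ζ : ℂ, ‖ζ‖ < 1 →
      ‖f₁ ζ * Complex.log (1 - ζ) / (2 * Real.pi * I)‖ ≤ C * (1 + |Real.log (1 - ‖ζ‖)|) := by
  obtain ⟨M, hM⟩ := (isCompact_closedBall (0:ℂ) 1).exists_bound_of_continuousOn
    hf₁.continuous.continuousOn
  have hlog2 : (0:ℝ) ≤ Real.log 2 := Real.log_nonneg (by norm_num)
  have hpi : (0:ℝ) < Real.pi := Real.pi_pos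
  refine ⟨(max M 0 + 1) * (Real.log 2 + Real.pi + 1), by positivity, fun ζ hζ => ?_⟩
  obtain ⟨hd0, hd1, hd2, hd3⟩ := aux_dist hζ
  have hlog := aux_core hd0 hd1 hd2 hd3
  have hf : ‖f₁ ζ‖ ≤ M := hM ζ (by simpa [mem_closedBall, Complex.dist_eq] using hζ.le)
  have hq : ‖f₁ ζ * Complex.log (1 - ζ) / (2 * Real.pi * I)‖
      = ‖f₁ ζ‖ * ‖Complex.log (1 - ζ)‖ / (2 * Real.pi) := aux_quot _ _
  rw [hq]
  have hfn : (0:ℝ) ≤ ‖f₁ ζ‖ := norm_nonneg _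
  have hln : (0:ℝ) ≤ ‖Complex.log (1 - ζ)‖ := norm_nonneg _
  have hM0 : M ≤ max M 0 + 1 := by
    have := le_max_left M 0; linarith
  have habs : (0:ℝ) ≤ |Real.log (1 - ‖ζ‖)| := abs_nonneg _
  have h2pi : (1:ℝ) ≤ 2 * Real.pi := by nlinarith [Real.pi_gt_three]
  have step1 : ‖f₁ ζ‖ * ‖Complex.log (1 - ζ)‖ ≤
      (max M 0 + 1) * (|Real.log (1 - ‖ζ‖)| + (Real.log 2 + Real.pi)) := by
    have hMn : (0:ℝ) ≤ max M 0 + 1 := by positivity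
    exact mul_le_mul (hf.trans hM0) hlog hln hMn
  have step2 : ‖f₁ ζ‖ * ‖Complex.log (1 - ζ)‖ / (2 * Real.pi)
      ≤ ‖f₁ ζ‖ * ‖Complex.log (1 - ζ)‖ := by
    apply div_le_self (by positivity) h2pi
  refine step2.trans (step1.trans ?_)
  have key : |Real.log (1 - ‖ζ‖)| + (Real.log 2 + Real.pi)
      ≤ (Real.log 2 + Real.pi + 1) * (1 + |Real.log (1 - ‖ζ‖)|) := by
    nlinarith [mul_nonneg (add_nonneg hlog2 hpi.le) habs]
  rw [mul_assoc]
  exact mul_le_mul_of_nonneg_left key (by positivity)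

private lemma aux_tendsto (K c : ℝ) :
    Tendsto (fun x : ℝ => (1 - x) * (K * (1 + c + |Real.log (1 - x)|) ^ 2))
      (nhdsWithin 1 (Set.Ioo (0 : ℝ) 1)) (nhds 0) := by
  have hmap : Tendsto (fun x : ℝ => 1 - x) (nhdsWithin 1 (Set.Ioo (0:ℝ) 1))
      (nhdsWithin 0 (Set.Ioo (0:ℝ) 1)) := by
    rw [tendsto_nhdsWithin_iff]
    constructor
    · have h : Tendsto (fun x : ℝ => 1 - x) (nhds 1) (nhds 0) := by
        have hc : Continuous (fun x : ℝ => 1 - x) := continuous_const.sub continuous_id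
        have := hc.tendsto (1:ℝ)
        simpa using this
      exact h.mono_left nhdsWithin_le_nhds
    · filter_upwards [self_mem_nhdsWithin] with x hx
      exact ⟨by linarith [hx.2], by linarith [hx.1]⟩
  suffices h : Tendsto (fun t : ℝ => t * (K * (1 + c + |Real.log t|) ^ 2))
      (nhdsWithin 0 (Set.Ioo (0:ℝ) 1)) (nhds 0) by
    have := h.comp hmap
    exact this
  have hlog : Tendsto (fun t : ℝ => -Real.log t) (nhdsWithin 0 (Set.Ioo (0:ℝ) 1)) atTop := by
    have h1 : Tendsto Real.log (nhdsWithin 0 (Set.Ioo (0:ℝ) 1)) atBot :=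
      Real.tendsto_log_nhdsGT_zero.mono_left (nhdsWithin_mono _ (fun x hx => hx.1))
    exact tendsto_neg_atBot_atTop.comp h1
  have hΦ : Tendsto (fun s : ℝ => Real.exp (-s) * (K * (1 + c + s) ^ 2)) atTop (nhds 0) := by
    have h2 : Tendsto (fun u : ℝ => u ^ 2 * Real.exp (-u)) atTop (nhds 0) :=
      Real.tendsto_pow_mul_exp_neg_atTop_nhds_zero 2
    have h3 : Tendsto (fun s : ℝ => s + (1 + c)) atTop atTop :=
      tendsto_atTop_add_const_right _ _ tendsto_id
    have h4 := (h2.comp h3).const_mul (K * Real.exp (1 + c))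
    rw [mul_zero] at h4
    refine h4.congr (fun s => ?_)
    have h5 : Real.exp (1 + c) * Real.exp (-(s + (1 + c))) = Real.exp (-s) := by
      rw [← Real.exp_add]; ring_nf
    calc K * Real.exp (1+c) * ((fun u : ℝ => u ^ 2 * Real.exp (-u)) ((fun s : ℝ => s + (1+c)) s))
        = (Real.exp (1+c) * Real.exp (-(s+(1+c)))) * (K * (s+(1+c))^2) := by
          simp only []; ring
      _ = Real.exp (-s) * (K * (1+c+s)^2) := by rw [h5]; ring
  have hcomp := hΦ.comp hlog
  refine Tendsto.congr' ?_ hcomp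
  filter_upwards [self_mem_nhdsWithin] with t ht
  have ht0 : 0 < t := ht.1
  have hlt : Real.log t ≤ 0 := Real.log_nonpos ht0.le ht.2.le
  simp only [Function.comp_apply]
  rw [neg_neg, Real.exp_log ht0, _root_.abs_of_nonpos hlt]

private lemma g_bound (ε r : ℝ) (hε : ε ∈ Set.Ioo (0:ℝ) 1) (hr : r ∈ Set.Ioo (0:ℝ) 1)
    (U : Set ℂ) (hU : U = ball (0:ℂ) (1+ε) \ (Complex.ofReal '' Set.Ico 1 (1+ε)))
    (g : ℂ → ℂ) (hg : DifferentiableOn ℂ g U)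
    (g₁ g₂ : ℂ → ℂ) (hg₁ : DifferentiableOn ℂ g₁ (ball (1:ℂ) r))
    (hg₂ : DifferentiableOn ℂ g₂ (ball (1:ℂ) r))
    (hrep : ∀ ζ ∈ ball (1:ℂ) r, ζ ∈ U → ζ ∉ Complex.ofReal '' Set.Ici 1 →
      g ζ = g₁ ζ * Complex.log (1 - ζ) / (2 * Real.pi * I) + g₂ ζ) :
    ∃ C : ℝ, 0 ≤ C ∧ ∀ ζ : ℂ, ‖ζ‖ < 1 → ‖g ζ‖ ≤ C * (1 + |Real.log (1 - ‖ζ‖)|) := by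
  have hε0 := hε.1
  have hr0 := hr.1
  have hr1 := hr.2
  -- facts about U
  have hmemU : ∀ z : ℂ, ‖z‖ < 1 → z ∈ U := by
    intro z hz
    rw [hU]
    refine ⟨by rw [mem_ball_zero_iff]; linarith, ?_⟩
    rintro ⟨t, ht, rfl⟩
    have : ‖(t:ℂ)‖ = |t| := Complex.norm_real t
    rw [this, _root_.abs_of_nonneg (by linarith [ht.1] : (0:ℝ) ≤ t)] at hz
    linarith [ht.1]
  have hnotIci : ∀ z : ℂ, ‖z‖ < 1 → z ∉ Complex.ofReal '' Set.Ici 1 := by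
    intro z hz
    rintro ⟨t, ht, rfl⟩
    have : ‖(t:ℂ)‖ = |t| := Complex.norm_real t
    rw [this, _root_.abs_of_nonneg (by linarith [mem_Ici.mp ht] : (0:ℝ) ≤ t)] at hz
    linarith [mem_Ici.mp ht]
  -- bounds for g₁ g₂ on closedBall 1 (r/2)
  have hsub : closedBall (1:ℂ) (r/2) ⊆ ball (1:ℂ) r := closedBall_subset_ball (by linarith)
  obtain ⟨M₁, hM₁⟩ := (isCompact_closedBall (1:ℂ) (r/2)).exists_bound_of_continuousOn
    (hg₁.continuousOn.mono hsub)
  obtain ⟨M₂, hM₂⟩ := (isCompact_closedBall (1:ℂ) (r/2)).exists_bound_of_continuousOn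
    (hg₂.continuousOn.mono hsub)
  -- bound for g away from 1
  set K : Set ℂ := closedBall (0:ℂ) 1 \ ball (1:ℂ) (r/2) with hK
  have hKcompact : IsCompact K := (isCompact_closedBall _ _).diff isOpen_ball
  have hKU : K ⊆ U := by
    rintro z ⟨hz1, hz2⟩
    rw [mem_closedBall_zero_iff] at hz1
    rw [hU]
    refine ⟨by rw [mem_ball_zero_iff]; linarith, ?_⟩
    rintro ⟨t, ht, rfl⟩
    have hnt : ‖(t:ℂ)‖ = |t| := Complex.norm_real t
    have ht1 : (1:ℝ) ≤ t := ht.1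
    have : t ≤ 1 := by
      rw [hnt, _root_.abs_of_nonneg (by linarith)] at hz1; exact hz1
    have ht' : t = 1 := le_antisymm this ht1
    apply hz2
    rw [ht']
    rw [mem_ball]
    simp only [Complex.ofReal_one, dist_self]
    linarith
  obtain ⟨M₃, hM₃⟩ := hKcompact.exists_bound_of_continuousOn (hg.continuousOn.mono hKU)
  have hlog2 : (0:ℝ) ≤ Real.log 2 := Real.log_nonneg (by norm_num)
  have hpi : (0:ℝ) < Real.pi := Real.pi_pos
  have h2pi : (1:ℝ) ≤ 2 * Real.pi := by nlinarith [Real.pi_gt_three]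
  set C : ℝ := (max M₁ 0 + max M₂ 0 + max M₃ 0 + 1) * (Real.log 2 + Real.pi + 1) with hC
  refine ⟨C, by positivity, fun ζ hζ => ?_⟩
  have habs : (0:ℝ) ≤ |Real.log (1 - ‖ζ‖)| := abs_nonneg _
  have hCge : ∀ X : ℝ, X ≤ max M₁ 0 + max M₂ 0 + max M₃ 0 + 1 → X ≥ 0 → True := fun _ _ _ => trivial
  by_cases hnear : ζ ∈ ball (1:ℂ) (r/2)
  · -- near 1 : use the representation
    have hζballr : ζ ∈ ball (1:ℂ) r := ball_subset_ball (by linarith) hnear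
    have hrepζ := hrep ζ hζballr (hmemU ζ hζ) (hnotIci ζ hζ)
    obtain ⟨hd0, hd1, hd2, hd3⟩ := aux_dist hζ
    have hlog := aux_core hd0 hd1 hd2 hd3
    have hζcb : ζ ∈ closedBall (1:ℂ) (r/2) := ball_subset_closedBall hnear
    have hb1 : ‖g₁ ζ‖ ≤ M₁ := hM₁ ζ hζcb
    have hb2 : ‖g₂ ζ‖ ≤ M₂ := hM₂ ζ hζcb
    rw [hrepζ]
    have hq : ‖g₁ ζ * Complex.log (1 - ζ) / (2 * Real.pi * I)‖
        = ‖g₁ ζ‖ * ‖Complex.log (1 - ζ)‖ / (2 * Real.pi) := aux_quot _ _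
    have step0 : ‖g₁ ζ * Complex.log (1 - ζ) / (2 * Real.pi * I) + g₂ ζ‖
        ≤ ‖g₁ ζ‖ * ‖Complex.log (1 - ζ)‖ / (2 * Real.pi) + ‖g₂ ζ‖ := by
      rw [← hq]; exact norm_add_le _ _
    refine step0.trans ?_
    have hfn : (0:ℝ) ≤ ‖g₁ ζ‖ := norm_nonneg _
    have hln : (0:ℝ) ≤ ‖Complex.log (1 - ζ)‖ := norm_nonneg _
    have step2 : ‖g₁ ζ‖ * ‖Complex.log (1 - ζ)‖ / (2 * Real.pi)
        ≤ ‖g₁ ζ‖ * ‖Complex.log (1 - ζ)‖ := div_le_self (by positivity) h2pi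
    have step1 : ‖g₁ ζ‖ * ‖Complex.log (1 - ζ)‖ ≤
        (max M₁ 0) * (|Real.log (1 - ‖ζ‖)| + (Real.log 2 + Real.pi)) :=
      mul_le_mul (hb1.trans (le_max_left _ _)) hlog hln (le_max_right _ _)
    have hb2' : ‖g₂ ζ‖ ≤ max M₂ 0 := hb2.trans (le_max_left _ _)
    have hM1n : (0:ℝ) ≤ max M₁ 0 := le_max_right _ _
    have hM2n : (0:ℝ) ≤ max M₂ 0 := le_max_right _ _
    have hM3n : (0:ℝ) ≤ max M₃ 0 := le_max_right _ _
    rw [hC]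
    nlinarith [mul_nonneg hM1n habs, mul_nonneg hM2n habs, mul_nonneg hM3n habs,
      mul_nonneg (mul_nonneg hM1n habs) hlog2, mul_nonneg (mul_nonneg hM1n habs) hpi.le,
      mul_nonneg (add_nonneg hlog2 hpi.le) habs]
  · -- far from 1
    have hζK : ζ ∈ K := ⟨mem_closedBall_zero_iff.mpr hζ.le, hnear⟩
    have hb3 : ‖g ζ‖ ≤ M₃ := hM₃ ζ hζK
    have hM1n : (0:ℝ) ≤ max M₁ 0 := le_max_right _ _
    have hM2n : (0:ℝ) ≤ max M₂ 0 := le_max_right _ _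
    have hM3n : (0:ℝ) ≤ max M₃ 0 := le_max_right _ _
    have hb3' : ‖g ζ‖ ≤ max M₃ 0 := hb3.trans (le_max_left _ _)
    rw [hC]
    nlinarith [mul_nonneg (add_nonneg (add_nonneg (add_nonneg hM1n hM2n) hM3n) zero_le_one)
      (mul_nonneg (add_nonneg hlog2 hpi.le) habs), mul_nonneg hM3n habs]

private lemma parseval {a b : ℕ → ℂ} {F G : ℂ → ℂ}
    (hFa : ∀ ζ : ℂ, ‖ζ‖ < 1 → HasSum (fun n => a n * ζ ^ n) (F ζ))
    (hGb : ∀ ζ : ℂ, ‖ζ‖ < 1 → HasSum (fun n => b n * ζ ^ n) (G ζ))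
    {ρ : ℝ} (hρ0 : 0 < ρ) (hρ1 : ρ < 1) :
    HasSum (fun n => a n * b n * (((ρ ^ 2 : ℝ) : ℂ)) ^ n)
      ((2 * Real.pi)⁻¹ • ∫ θ in Set.Ioc (0 : ℝ) (2 * Real.pi),
        F ((ρ:ℂ) * Complex.exp (θ * I)) * G ((ρ:ℂ) * Complex.exp (-(θ * I)))) := by
  have hpi : (0:ℝ) < Real.pi := Real.pi_pos
  set ρ' : ℝ := (1 + ρ) / 2 with hρ'
  have hρ'0 : 0 < ρ' := by rw [hρ']; linarith
  have hρρ' : ρ < ρ' := by rw [hρ']; linarith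
  have hρ'1 : ρ' < 1 := by rw [hρ']; linarith
  have hnρ' : ‖((ρ' : ℝ) : ℂ)‖ < 1 := by
    rw [Complex.norm_real, Real.norm_of_nonneg hρ'0.le]; exact hρ'1
  obtain ⟨Ka, _, hKa⟩ := coeff_bound hρ'0.le (hFa _ hnρ')
  obtain ⟨Kb, _, hKb⟩ := coeff_bound hρ'0.le (hGb _ hnρ')
  have hfa : Summable (fun n => ‖a n‖ * ρ ^ n) := summable_aux hρ'0 hKa hρ0.le hρρ'
  have hfb : Summable (fun n => ‖b n‖ * ρ ^ n) := summable_aux hρ'0 hKb hρ0.le hρρ'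
  have hprod : Summable (fun p : ℕ × ℕ => (‖a p.1‖ * ρ ^ p.1) * (‖b p.2‖ * ρ ^ p.2)) :=
    hfa.mul_of_nonneg hfb (fun n => by positivity) (fun n => by positivity)
  -- the two circle points
  set z1 : ℝ → ℂ := fun θ => (ρ:ℂ) * Complex.exp (θ * I) with hz1def
  set z2 : ℝ → ℂ := fun θ => (ρ:ℂ) * Complex.exp (-(θ * I)) with hz2def
  have hz1 : ∀ θ : ℝ, ‖z1 θ‖ = ρ := by
    intro θ
    rw [hz1def]
    simp only [norm_mul, Complex.norm_exp_ofReal_mul_I, mul_one,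
      Complex.norm_real, Real.norm_of_nonneg hρ0.le]
  have hz2 : ∀ θ : ℝ, ‖z2 θ‖ = ρ := by
    intro θ
    rw [hz2def]
    have hneg : -((θ:ℂ) * I) = ((-θ : ℝ) : ℂ) * I := by push_cast; ring
    simp only [hneg]
    simp only [norm_mul, Complex.norm_exp_ofReal_mul_I, mul_one,
      Complex.norm_real, Real.norm_of_nonneg hρ0.le]
  have hTnorm : ∀ (p : ℕ × ℕ) (θ : ℝ),
      ‖a p.1 * z1 θ ^ p.1 * (b p.2 * z2 θ ^ p.2)‖
        = (‖a p.1‖ * ρ ^ p.1) * (‖b p.2‖ * ρ ^ p.2) := by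
    intro p θ
    simp only [norm_mul, norm_pow, hz1, hz2]
  -- pointwise Hadamard sum
  have hpt : ∀ θ : ℝ, HasSum (fun p : ℕ × ℕ => a p.1 * z1 θ ^ p.1 * (b p.2 * z2 θ ^ p.2))
      (F (z1 θ) * G (z2 θ)) := by
    intro θ
    have h1 : ‖z1 θ‖ < 1 := by rw [hz1]; exact hρ1
    have h2 : ‖z2 θ‖ < 1 := by rw [hz2]; exact hρ1
    have hna : Summable (fun n : ℕ => ‖a n * z1 θ ^ n‖) := by
      refine hfa.congr fun n => ?_
      rw [norm_mul, norm_pow, hz1]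
    have hnb : Summable (fun n : ℕ => ‖b n * z2 θ ^ n‖) := by
      refine hfb.congr fun n => ?_
      rw [norm_mul, norm_pow, hz2]
    have hS : Summable (fun p : ℕ × ℕ => a p.1 * z1 θ ^ p.1 * (b p.2 * z2 θ ^ p.2)) :=
      (hna.mul_norm hnb).of_norm
    rw [hS.hasSum_iff]
    rw [← (hFa _ h1).tsum_eq, ← (hGb _ h2).tsum_eq]
    exact (tsum_mul_tsum_of_summable_norm hna hnb).symm
  -- integrability of each term
  have hint : ∀ p : ℕ × ℕ,
      IntegrableOn (fun θ : ℝ => a p.1 * z1 θ ^ p.1 * (b p.2 * z2 θ ^ p.2))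
        (Set.Ioc (0:ℝ) (2 * Real.pi)) volume := by
    intro p
    apply Continuous.integrableOn_Ioc
    rw [hz1def, hz2def]
    fun_prop
  -- summability of integrals of norms
  have hnormint : Summable (fun p : ℕ × ℕ =>
      ∫ θ in Set.Ioc (0:ℝ) (2 * Real.pi), ‖a p.1 * z1 θ ^ p.1 * (b p.2 * z2 θ ^ p.2)‖) := by
    have heq : ∀ p : ℕ × ℕ, (∫ θ in Set.Ioc (0:ℝ) (2 * Real.pi),
        ‖a p.1 * z1 θ ^ p.1 * (b p.2 * z2 θ ^ p.2)‖)
        = (2 * Real.pi) * ((‖a p.1‖ * ρ ^ p.1) * (‖b p.2‖ * ρ ^ p.2)) := by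
      intro p
      have he : (fun θ : ℝ => ‖a p.1 * z1 θ ^ p.1 * (b p.2 * z2 θ ^ p.2)‖)
          = fun _ => (‖a p.1‖ * ρ ^ p.1) * (‖b p.2‖ * ρ ^ p.2) :=
        funext (hTnorm p)
      rw [he, setIntegral_const, Real.volume_real_Ioc_of_le (by linarith), smul_eq_mul]
      ring
    exact (hprod.mul_left (2 * Real.pi)).congr (fun p => (heq p).symm)
  have key := hasSum_integral_of_summable_integral_norm hint hnormint
  -- identify the integrand
  have hre : (fun θ : ℝ => ∑' p : ℕ × ℕ, a p.1 * z1 θ ^ p.1 * (b p.2 * z2 θ ^ p.2))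
      = fun θ => F (z1 θ) * G (z2 θ) :=
    funext fun θ => (hpt θ).tsum_eq
  rw [hre] at key
  -- compute each integral
  have hI : ∀ p : ℕ × ℕ,
      (∫ θ in Set.Ioc (0:ℝ) (2 * Real.pi), a p.1 * z1 θ ^ p.1 * (b p.2 * z2 θ ^ p.2))
      = if p.1 = p.2 then (2 * Real.pi : ℝ) • (a p.1 * b p.2 * (ρ:ℂ) ^ (p.1 + p.2)) else 0 := by
    rintro ⟨n, m⟩
    have hterm : ∀ θ : ℝ, a n * z1 θ ^ n * (b m * z2 θ ^ m)
        = (a n * b m * (ρ:ℂ) ^ (n + m)) * Complex.exp ((((n:ℂ) - m) * I) * θ) := by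
      intro θ
      simp only [hz1def, hz2def]
      have e1 : ((ρ:ℂ) * Complex.exp ((θ:ℂ) * I)) ^ n
          = (ρ:ℂ) ^ n * Complex.exp ((n:ℂ) * ((θ:ℂ) * I)) := by
        rw [mul_pow, Complex.exp_nat_mul]
      have e2 : ((ρ:ℂ) * Complex.exp (-((θ:ℂ) * I))) ^ m
          = (ρ:ℂ) ^ m * Complex.exp ((m:ℂ) * (-((θ:ℂ) * I))) := by
        rw [mul_pow, Complex.exp_nat_mul]
      have e3 : Complex.exp ((n:ℂ) * ((θ:ℂ) * I)) * Complex.exp ((m:ℂ) * (-((θ:ℂ) * I)))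
          = Complex.exp ((((n:ℂ) - m) * I) * θ) := by
        rw [← Complex.exp_add]; congr 1; ring
      simp only [e1, e2]
      rw [pow_add]
      calc a n * ((ρ:ℂ) ^ n * Complex.exp ((n:ℂ) * ((θ:ℂ) * I)))
            * (b m * ((ρ:ℂ) ^ m * Complex.exp ((m:ℂ) * (-((θ:ℂ) * I)))))
          = a n * b m * ((ρ:ℂ) ^ n * (ρ:ℂ) ^ m)
            * (Complex.exp ((n:ℂ) * ((θ:ℂ) * I)) * Complex.exp ((m:ℂ) * (-((θ:ℂ) * I)))) := by
            ring
        _ = _ := by rw [e3]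
    by_cases hnm : n = m
    · subst hnm
      simp only [if_pos]
      have he : (fun θ : ℝ => a n * z1 θ ^ n * (b n * z2 θ ^ n))
          = fun _ : ℝ => a n * b n * (ρ:ℂ) ^ (n + n) := by
        funext θ
        rw [hterm θ]
        simp [sub_self]
      rw [he, setIntegral_const, Real.volume_real_Ioc_of_le (by linarith)]
      norm_num
    · rw [if_neg hnm]
      set c : ℂ := ((n:ℂ) - m) * I with hc
      have hcne : c ≠ 0 := by
        rw [hc]
        apply mul_ne_zero _ Complex.I_ne_zero
        rw [sub_ne_zero]
        exact_mod_cast hnm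
      have he : (fun θ : ℝ => a n * z1 θ ^ n * (b m * z2 θ ^ m))
          = fun θ : ℝ => (a n * b m * (ρ:ℂ) ^ (n + m)) * Complex.exp (c * θ) := by
        funext θ; rw [hterm θ, hc]
      rw [he]
      rw [← intervalIntegral.integral_of_le (by linarith : (0:ℝ) ≤ 2 * Real.pi)]
      rw [intervalIntegral.integral_const_mul]
      rw [integral_exp_mul_complex hcne]
      have hval : Complex.exp (c * ((2 * Real.pi : ℝ) : ℂ)) = 1 := by
        have harg : c * ((2 * Real.pi : ℝ) : ℂ)
            = (((n:ℤ) - (m:ℤ) : ℤ) : ℂ) * (2 * (Real.pi:ℂ) * I) := by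
          rw [hc]; push_cast; ring
        rw [harg]
        exact Complex.exp_int_mul_two_pi_mul_I _
      rw [hval]
      norm_num
  have key2 : HasSum (fun p : ℕ × ℕ =>
      if p.1 = p.2 then (2 * Real.pi : ℝ) • (a p.1 * b p.2 * (ρ:ℂ) ^ (p.1 + p.2)) else 0)
      (∫ θ in Set.Ioc (0:ℝ) (2 * Real.pi), F (z1 θ) * G (z2 θ)) :=
    key.congr_fun (fun p => (hI p).symm)
  -- extract diagonal
  have hinj : Function.Injective (fun n : ℕ => ((n, n) : ℕ × ℕ)) :=
    fun x y h => congrArg Prod.fst h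
  have hvan : ∀ p : ℕ × ℕ, p ∉ Set.range (fun n : ℕ => ((n, n) : ℕ × ℕ)) →
      (if p.1 = p.2 then (2 * Real.pi : ℝ) • (a p.1 * b p.2 * (ρ:ℂ) ^ (p.1 + p.2)) else 0) = 0 := by
    rintro ⟨n, m⟩ hp
    have hne : n ≠ m := by
      intro h
      subst h
      exact hp ⟨n, rfl⟩
    exact if_neg hne
  have key3 := (Function.Injective.hasSum_iff hinj hvan).mpr key2
  have key4 := key3.const_smul ((2 * Real.pi)⁻¹ : ℝ)
  have key5 : HasSum (fun n : ℕ => a n * b n * (((ρ ^ 2 : ℝ)) : ℂ) ^ n)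
      ((2 * Real.pi)⁻¹ • ∫ θ in Set.Ioc (0:ℝ) (2 * Real.pi), F (z1 θ) * G (z2 θ)) := by
    refine key4.congr_fun fun n => ?_
    simp only [Function.comp_apply]
    rw [if_true, smul_smul, inv_mul_cancel₀ (by positivity : (2 * Real.pi : ℝ) ≠ 0), one_smul]
    congr 1
    push_cast
    rw [← pow_mul, two_mul]
  simp only [hz1def, hz2def] at key5
  exact key5

/-- If `F(ζ) = f₁(ζ)log(1−ζ)/(2πi)` with `f₁` entire and `g` has at worst a logarithmic
(simple, no pole) singularity at `1`, then `(1−ζ) · (F ⊙ g)(ζ) → 0` as `ζ → 1⁻`. -/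
theorem stmt8 (ε r : ℝ) (hε : ε ∈ Set.Ioo (0 : ℝ) 1) (hr : r ∈ Set.Ioo (0 : ℝ) 1)
    (f₁ : ℂ → ℂ) (hf₁ : Differentiable ℂ f₁)
    (a : ℕ → ℂ)
    (ha : ∀ ζ : ℂ, ‖ζ‖ < 1 → HasSum (fun n => a n * ζ ^ n)
      (f₁ ζ * Complex.log (1 - ζ) / (2 * Real.pi * I)))
    (U : Set ℂ) (hU : U = ball (0 : ℂ) (1 + ε) \ (Complex.ofReal '' Set.Ico 1 (1 + ε)))
    (g : ℂ → ℂ) (hg : DifferentiableOn ℂ g U)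
    (b : ℕ → ℂ) (hb : ∀ ζ : ℂ, ‖ζ‖ < 1 → HasSum (fun n => b n * ζ ^ n) (g ζ))
    (g₁ g₂ : ℂ → ℂ)
    (hg₁ : DifferentiableOn ℂ g₁ (ball (1 : ℂ) r))
    (hg₂ : DifferentiableOn ℂ g₂ (ball (1 : ℂ) r))
    (hrep : ∀ ζ ∈ ball (1 : ℂ) r, ζ ∈ U → ζ ∉ Complex.ofReal '' Set.Ici 1 →
      g ζ = g₁ ζ * Complex.log (1 - ζ) / (2 * Real.pi * I) + g₂ ζ) :
    (∀ ζ : ℂ, ‖ζ‖ < 1 → Summable (fun n => a n * b n * ζ ^ n)) ∧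
    Tendsto (fun x : ℝ => (1 - (x : ℂ)) * ∑' n, a n * b n * (x : ℂ) ^ n)
      (nhdsWithin 1 (Set.Ioo (0 : ℝ) 1)) (nhds 0) := by
  obtain ⟨CF, hCF0, hCF⟩ := F_bound hf₁
  obtain ⟨Cg, hCg0, hCg⟩ := g_bound ε r hε hr U hU g hg g₁ g₂ hg₁ hg₂ hrep
  constructor
  · -- summability
    intro ζ hζ
    have hζ0 : (0:ℝ) ≤ ‖ζ‖ := norm_nonneg _
    set ρ' : ℝ := Real.sqrt ((1 + ‖ζ‖) / 2) with hρ'def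
    have hmid0 : 0 < (1 + ‖ζ‖) / 2 := by linarith
    have hρ'0 : 0 < ρ' := Real.sqrt_pos.mpr hmid0
    have hρ'sq : ρ' ^ 2 = (1 + ‖ζ‖) / 2 := Real.sq_sqrt hmid0.le
    have hρ'1 : ρ' < 1 := by
      have hsq : ρ' ^ 2 < 1 := by rw [hρ'sq]; linarith
      nlinarith
    have hnρ' : ‖((ρ' : ℝ) : ℂ)‖ < 1 := by
      rw [Complex.norm_real, Real.norm_of_nonneg hρ'0.le]; exact hρ'1
    obtain ⟨Ka, hKa0, hKa⟩ := coeff_bound hρ'0.le (ha _ hnρ')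
    obtain ⟨Kb, hKb0, hKb⟩ := coeff_bound hρ'0.le (hb _ hnρ')
    refine Summable.of_norm ?_
    have hratio : ‖ζ‖ / ρ' ^ 2 < 1 := by
      rw [div_lt_one (by positivity), hρ'sq]; linarith
    have hgeom : Summable (fun n : ℕ => (Ka * Kb) * (‖ζ‖ / ρ' ^ 2) ^ n) :=
      (summable_geometric_of_lt_one (by positivity) hratio).mul_left _
    refine hgeom.of_nonneg_of_le (fun n => norm_nonneg _) (fun n => ?_)
    have hkey : (‖a n‖ * ρ' ^ n) * (‖b n‖ * ρ' ^ n) ≤ Ka * Kb :=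
      mul_le_mul (hKa n) (hKb n) (by positivity) hKa0
    have hexp : ‖a n * b n * ζ ^ n‖
        = ((‖a n‖ * ρ' ^ n) * (‖b n‖ * ρ' ^ n)) * (‖ζ‖ / ρ' ^ 2) ^ n := by
      rw [norm_mul, norm_mul, norm_pow, div_pow, ← pow_mul, two_mul, pow_add]
      have hne : ρ' ^ n ≠ 0 := by positivity
      field_simp
    rw [hexp]
    exact mul_le_mul_of_nonneg_right hkey (by positivity)
  · -- the limit
    refine squeeze_zero_norm' ?_ (aux_tendsto (CF * Cg) (Real.log 2))
    filter_upwards [self_mem_nhdsWithin] with x hx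
    obtain ⟨hx0, hx1⟩ := hx
    set ρ : ℝ := Real.sqrt x with hρdef
    have hρ0 : 0 < ρ := Real.sqrt_pos.mpr hx0
    have hρsq : ρ ^ 2 = x := Real.sq_sqrt hx0.le
    have hρ1 : ρ < 1 := by
      have hsq : ρ ^ 2 < 1 := by rw [hρsq]; exact hx1
      nlinarith
    have hps := parseval ha hb hρ0 hρ1
    rw [hρsq] at hps
    -- circle point norms
    have hn1 : ∀ θ : ℝ, ‖(ρ:ℂ) * Complex.exp ((θ:ℂ) * I)‖ = ρ := by
      intro θ
      simp only [norm_mul, Complex.norm_exp_ofReal_mul_I, mul_one,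
        Complex.norm_real, Real.norm_of_nonneg hρ0.le]
    have hn2 : ∀ θ : ℝ, ‖(ρ:ℂ) * Complex.exp (-((θ:ℂ) * I))‖ = ρ := by
      intro θ
      have hneg : -((θ:ℂ) * I) = ((-θ : ℝ) : ℂ) * I := by push_cast; ring
      rw [hneg]
      simp only [norm_mul, Complex.norm_exp_ofReal_mul_I, mul_one,
        Complex.norm_real, Real.norm_of_nonneg hρ0.le]
    set L : ℝ := |Real.log (1 - ρ)| with hLdef
    -- bound the integrand
    have hbound : ∀ θ ∈ Set.Ioc (0:ℝ) (2 * Real.pi),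
        ‖f₁ ((ρ:ℂ) * Complex.exp ((θ:ℂ) * I)) *
            Complex.log (1 - (ρ:ℂ) * Complex.exp ((θ:ℂ) * I)) / (2 * Real.pi * I) *
          g ((ρ:ℂ) * Complex.exp (-((θ:ℂ) * I)))‖
        ≤ (CF * (1 + L)) * (Cg * (1 + L)) := by
      intro θ _
      rw [norm_mul]
      have hb1 := hCF ((ρ:ℂ) * Complex.exp ((θ:ℂ) * I)) (by rw [hn1]; exact hρ1)
      have hb2 := hCg ((ρ:ℂ) * Complex.exp (-((θ:ℂ) * I))) (by rw [hn2]; exact hρ1)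
      rw [hn1] at hb1
      rw [hn2] at hb2
      exact mul_le_mul (by rwa [hLdef]) (by rwa [hLdef]) (norm_nonneg _) (by positivity)
    -- bound the integral
    have hvol : volume (Set.Ioc (0:ℝ) (2 * Real.pi)) < ⊤ := by
      rw [Real.volume_Ioc]; exact ENNReal.ofReal_lt_top
    have hInorm := norm_setIntegral_le_of_norm_le_const hvol hbound
    rw [Real.volume_real_Ioc_of_le (by linarith [Real.pi_pos] : (0:ℝ) ≤ 2 * Real.pi)] at hInorm
    -- put it together
    rw [hps.tsum_eq, norm_mul, norm_smul]
    have hx1c : ‖(1 - (x:ℂ))‖ = 1 - x := by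
      rw [show (1 - (x:ℂ)) = (((1 - x : ℝ)) : ℂ) by push_cast; ring, Complex.norm_real,
        Real.norm_of_nonneg (by linarith)]
    rw [hx1c]
    have hpi : (0:ℝ) < Real.pi := Real.pi_pos
    have hnormsmul : ‖(2 * Real.pi)⁻¹‖ = (2 * Real.pi)⁻¹ :=
      Real.norm_of_nonneg (by positivity)
    rw [hnormsmul]
    have step : (2 * Real.pi)⁻¹ * ‖∫ θ in Set.Ioc (0:ℝ) (2 * Real.pi),
        f₁ ((ρ:ℂ) * Complex.exp ((θ:ℂ) * I)) *
          Complex.log (1 - (ρ:ℂ) * Complex.exp ((θ:ℂ) * I)) / (2 * Real.pi * I) *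
          g ((ρ:ℂ) * Complex.exp (-((θ:ℂ) * I)))‖
        ≤ (CF * (1 + L)) * (Cg * (1 + L)) := by
      have h2 : (CF * (1 + L)) * (Cg * (1 + L)) * (2 * Real.pi - 0) * (2 * Real.pi)⁻¹
          = (CF * (1 + L)) * (Cg * (1 + L)) := by
        field_simp; ring
      calc (2 * Real.pi)⁻¹ * ‖_‖ ≤ (2 * Real.pi)⁻¹ * ((CF * (1 + L)) * (Cg * (1 + L)) * (2 * Real.pi - 0)) :=
            mul_le_mul_of_nonneg_left hInorm (by positivity)
        _ = (CF * (1 + L)) * (Cg * (1 + L)) := by rw [mul_comm]; exact h2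
    -- compare L with |log (1-x)|
    have hLle : L ≤ Real.log 2 + |Real.log (1 - x)| := by
      have h1x : 0 < 1 - x := by linarith
      have h1ρ : 0 < 1 - ρ := by linarith
      have hhalf : (1 - x) / 2 ≤ 1 - ρ := by nlinarith [sq_nonneg (1 - ρ)]
      have hmono : Real.log ((1 - x) / 2) ≤ Real.log (1 - ρ) :=
        Real.log_le_log (by positivity) hhalf
      have hlρ : Real.log (1 - ρ) ≤ 0 := Real.log_nonpos h1ρ.le (by linarith)
      have hlx : Real.log (1 - x) ≤ 0 := Real.log_nonpos h1x.le (by linarith)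
      have hdiv : Real.log ((1 - x) / 2) = Real.log (1 - x) - Real.log 2 :=
        Real.log_div (by linarith) (by norm_num)
      rw [hLdef, _root_.abs_of_nonpos hlρ, _root_.abs_of_nonpos hlx]
      linarith
    have hfinal : (CF * (1 + L)) * (Cg * (1 + L))
        ≤ (CF * Cg) * (1 + Real.log 2 + |Real.log (1 - x)|) ^ 2 := by
      have hL0 : 0 ≤ L := abs_nonneg _
      have h1 : 1 + L ≤ 1 + Real.log 2 + |Real.log (1 - x)| := by linarith
      have h2 : (1 + L) ^ 2 ≤ (1 + Real.log 2 + |Real.log (1 - x)|) ^ 2 :=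
        pow_le_pow_left₀ (by linarith) h1 2
      calc (CF * (1 + L)) * (Cg * (1 + L)) = (CF * Cg) * (1 + L) ^ 2 := by ring
        _ ≤ (CF * Cg) * (1 + Real.log 2 + |Real.log (1 - x)|) ^ 2 :=
          mul_le_mul_of_nonneg_left h2 (by positivity)
    have hmul : (1 - x) * ((2 * Real.pi)⁻¹ * ‖_‖) ≤ (1 - x) * ((CF * Cg) * (1 + Real.log 2 + |Real.log (1 - x)|) ^ 2) :=
      mul_le_mul_of_nonneg_left (step.trans hfinal) (by linarith)
    exact hmul

end
end

section
/- Let ω ∈ ℂ with ω ≠ 0, let 0 < r < |ω|, let A ∈ ℂ with A ≠ 0, let f : ℂ → ℂ be entire, and let φ be holomorphic on the disk D(ω,r). Suppose that for every ζ ∈ D(ω,r) one has A·φ(ζ) = (1/(2πi)) ∫_{[ω,ζ]} f(ζ/u)·φ(u)·du/u, the integral being taken along the straight segment from ω to ζ (which avoids 0 since r < |ω|). Then φ is identically zero on D(ω,r). -/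
open Metric Complex
open Set MeasureTheory intervalIntegral

/-- Uniqueness for the homogeneous Volterra-type integral equation: if `φ` is holomorphic
on `D(ω,r)` (with `0 < r < |ω|`, `A ≠ 0`, `f` entire) and
`A·φ(ζ) = (1/2πi)∫_{[ω,ζ]} f(ζ/u) φ(u) du/u` on `D(ω,r)` (segment parametrized by
`u = ω + t(ζ−ω)`), then `φ ≡ 0` on `D(ω,r)`. -/
theorem stmt12 (ω : ℂ) (hω : ω ≠ 0) (r : ℝ) (hr0 : 0 < r) (hr : r < ‖ω‖)
    (A : ℂ) (hA : A ≠ 0) (f : ℂ → ℂ) (hf : Differentiable ℂ f)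
    (φ : ℂ → ℂ) (hφ : DifferentiableOn ℂ φ (ball ω r))
    (heq : ∀ ζ ∈ ball ω r, A * φ ζ = (1 / (2 * Real.pi * I)) * ((ζ - ω) *
      ∫ t in (0:ℝ)..1, f (ζ / (ω + (t : ℂ) * (ζ - ω))) * φ (ω + (t : ℂ) * (ζ - ω)) /
        (ω + (t : ℂ) * (ζ - ω)))) :
    ∀ ζ ∈ ball ω r, φ ζ = 0 := by
  intro ζ hζ
  by_cases hdz : ζ = ω
  · subst hdz
    have h := heq ζ (mem_ball_self hr0)
    simp at h
    exact h.resolve_left hA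
  -- setup
  set d : ℂ := ζ - ω with hddef
  have hd0 : d ≠ 0 := sub_ne_zero.mpr hdz
  have hdr : ‖d‖ < r := by rwa [mem_ball, dist_eq_norm] at hζ
  have hdpos : 0 < ‖d‖ := norm_pos_iff.mpr hd0
  have hB : 0 < ‖ω‖ - r := sub_pos.mpr hr
  set B : ℝ := ‖ω‖ - r with hBdef
  set p : ℝ → ℂ := fun u => ω + (u : ℂ) * d with hpdef
  set τ : ℝ := r / ‖d‖ with hτdef
  have hτ : 1 < τ := (one_lt_div hdpos).mpr hdr
  set U : Set ℝ := Ioo (-τ) τ with hUdef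
  have hUopen : IsOpen U := isOpen_Ioo
  have hIccU : Icc (0:ℝ) 1 ⊆ U := fun u hu =>
    ⟨lt_of_lt_of_le (by linarith) hu.1, lt_of_le_of_lt hu.2 hτ⟩
  have hpU : ∀ u ∈ U, p u ∈ ball ω r := by
    intro u hu
    rw [mem_ball, dist_eq_norm]
    have hdne : ‖d‖ ≠ 0 := ne_of_gt hdpos
    have : p u - ω = (u:ℂ) * d := by simp [hpdef]
    rw [this, norm_mul, Complex.norm_real]
    have h1 : |u| < τ := abs_lt.mpr ⟨hu.1, hu.2⟩
    calc ‖u‖ * ‖d‖ < τ * ‖d‖ := by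
          rw [Real.norm_eq_abs]; exact mul_lt_mul_of_pos_right h1 hdpos
      _ = r := by rw [hτdef, div_mul_cancel₀ r hdne]
  have hpB : ∀ u ∈ Icc (0:ℝ) 1, B ≤ ‖p u‖ := by
    intro u hu
    have h1 : ‖(u:ℂ) * d‖ ≤ r := by
      rw [norm_mul, Complex.norm_real, Real.norm_eq_abs, _root_.abs_of_nonneg hu.1]
      calc u * ‖d‖ ≤ 1 * ‖d‖ := mul_le_mul_of_nonneg_right hu.2 (norm_nonneg _)
        _ ≤ r := by linarith
    have h2 : ‖ω‖ ≤ ‖p u‖ + ‖(u:ℂ) * d‖ := by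
      calc ‖ω‖ = ‖p u - (u:ℂ) * d‖ := by simp [hpdef]
        _ ≤ ‖p u‖ + ‖(u:ℂ) * d‖ := norm_sub_le _ _
    simp only [hBdef]; linarith
  have hpne : ∀ u ∈ Icc (0:ℝ) 1, p u ≠ 0 := fun u hu =>
    norm_pos_iff.mp (lt_of_lt_of_le hB (hpB u hu))
  have hpub : ∀ u ∈ Icc (0:ℝ) 1, ‖p u‖ ≤ ‖ω‖ + r := by
    intro u hu
    have h1 : ‖(u:ℂ) * d‖ ≤ r := by
      rw [norm_mul, Complex.norm_real, Real.norm_eq_abs, _root_.abs_of_nonneg hu.1]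
      calc u * ‖d‖ ≤ 1 * ‖d‖ := mul_le_mul_of_nonneg_right hu.2 (norm_nonneg _)
        _ ≤ r := by linarith
    calc ‖p u‖ ≤ ‖ω‖ + ‖(u:ℂ) * d‖ := norm_add_le _ _
      _ ≤ ‖ω‖ + r := by linarith
  -- bound on f
  obtain ⟨M0, hM0⟩ := (isCompact_closedBall (0:ℂ) ((‖ω‖ + r) / B)).exists_bound_of_continuousOn
    hf.continuous.continuousOn
  set M : ℝ := max M0 0 with hMdef
  have hMnn : 0 ≤ M := le_max_right _ _
  have hM : ∀ x : ℂ, ‖x‖ ≤ (‖ω‖ + r) / B → ‖f x‖ ≤ M := by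
    intro x hx
    exact le_trans (hM0 x (by simpa [Complex.dist_eq, mem_closedBall, dist_zero_right] using hx))
      (le_max_left _ _)
  -- continuity of φ ∘ p
  have hgc : ContinuousOn (fun u : ℝ => φ (p u)) U := by
    intro u hu
    apply ContinuousAt.continuousWithinAt
    have hpc : ContinuousAt p u := by
      apply Continuous.continuousAt; simp only [hpdef]; fun_prop
    exact ((hφ.differentiableAt (isOpen_ball.mem_nhds (hpU u hu))).continuousAt).comp hpc
  have hgcAt : ∀ u ∈ Icc (0:ℝ) 1, ContinuousAt (fun u : ℝ => φ (p u)) u := fun u hu =>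
    hgc.continuousAt (hUopen.mem_nhds (hIccU hu))
  -- the primitive
  set h : ℝ → ℝ := fun s => ∫ u in (0:ℝ)..s, ‖φ (p u)‖ with hhdef
  have hGint : ∀ s ∈ Icc (0:ℝ) 1, IntervalIntegrable (fun u => ‖φ (p u)‖) volume 0 s := by
    intro s hs
    apply ContinuousOn.intervalIntegrable
    apply (hgc.norm).mono
    rw [uIcc_of_le hs.1]
    exact fun u hu => hIccU ⟨hu.1, le_trans hu.2 hs.2⟩
  have hderiv : ∀ s ∈ Icc (0:ℝ) 1, HasDerivAt h ‖φ (p s)‖ s := by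
    intro s hs
    exact intervalIntegral.integral_hasDerivAt_right (hGint s hs)
      ((hgc.norm).stronglyMeasurableAtFilter hUopen s (hIccU hs)) ((hgcAt s hs).norm)
  have hhc : ContinuousOn h (Icc 0 1) := fun s hs =>
    (hderiv s hs).continuousAt.continuousWithinAt
  have hhnn : ∀ s ∈ Icc (0:ℝ) 1, 0 ≤ h s := fun s hs =>
    intervalIntegral.integral_nonneg hs.1 (fun _ _ => norm_nonneg _)
  have hApos : (0:ℝ) < ‖A‖ := norm_pos_iff.mpr hA
  set K : ℝ := ‖d‖ * M / (2 * Real.pi * ‖A‖ * B) with hKdef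
  -- key estimate
  have key : ∀ s ∈ Icc (0:ℝ) 1, ‖φ (p s)‖ ≤ K * h s := by
    intro s hs
    have hps := heq (p s) (hpU s (hIccU hs))
    have hpe : ∀ t : ℝ, ω + (t:ℂ) * (p s - ω) = p (t * s) := by
      intro t; simp only [hpdef]; push_cast; ring
    have hint_eq : (∫ t in (0:ℝ)..1, f (p s / (ω + (t:ℂ) * (p s - ω))) *
          φ (ω + (t:ℂ) * (p s - ω)) / (ω + (t:ℂ) * (p s - ω))) =
        ∫ t in (0:ℝ)..1, f (p s / p (t * s)) * φ (p (t * s)) / p (t * s) := by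
      congr 1; funext t; rw [hpe]
    have hso : p s - ω = (s:ℂ) * d := by simp [hpdef]
    rw [hint_eq, hso] at hps
    -- norms
    set J : ℂ := ∫ t in (0:ℝ)..1, f (p s / p (t * s)) * φ (p (t * s)) / p (t * s) with hJdef
    have hn : ‖A‖ * ‖φ (p s)‖ = (1 / (2 * Real.pi)) * (s * ‖d‖ * ‖J‖) := by
      have hnn := congrArg norm hps
      rw [norm_mul, norm_mul, norm_mul, norm_mul, Complex.norm_real,
        Real.norm_eq_abs, _root_.abs_of_nonneg hs.1] at hnn
      rw [hnn]
      have hc : ‖(1 / (2 * Real.pi * I) : ℂ)‖ = 1 / (2 * Real.pi) := by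
        simp [norm_div, norm_mul, Complex.norm_real, abs_of_pos Real.pi_pos]
      rw [hc]
    -- integrand bound
    have hts : ∀ t ∈ Icc (0:ℝ) 1, t * s ∈ Icc (0:ℝ) 1 := by
      intro t ht
      exact ⟨mul_nonneg ht.1 hs.1, mul_le_one₀ ht.2 hs.1 hs.2⟩
    have hbnd : ∀ t ∈ Icc (0:ℝ) 1,
        ‖f (p s / p (t * s)) * φ (p (t * s)) / p (t * s)‖ ≤ (M / B) * ‖φ (p (t * s))‖ := by
      intro t ht
      have hts' := hts t ht
      have hquot : ‖p s / p (t * s)‖ ≤ (‖ω‖ + r) / B := by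
        rw [norm_div]
        exact div_le_div₀ (by positivity) (hpub s hs) hB (hpB _ hts')
      have hfM : ‖f (p s / p (t * s))‖ ≤ M := hM _ hquot
      rw [norm_div, norm_mul]
      calc ‖f (p s / p (t * s))‖ * ‖φ (p (t * s))‖ / ‖p (t * s)‖
          ≤ M * ‖φ (p (t * s))‖ / B := by
            apply div_le_div₀ (by positivity)
              (mul_le_mul_of_nonneg_right hfM (norm_nonneg _)) hB (hpB _ hts')
        _ = (M / B) * ‖φ (p (t * s))‖ := by ring
    -- integrability of both sides
    have hcont1 : ContinuousOn (fun t : ℝ => f (p s / p (t * s)) * φ (p (t * s)) / p (t * s))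
        (Icc (0:ℝ) 1) := by
      intro t ht
      apply ContinuousAt.continuousWithinAt
      have hmc : ContinuousAt (fun t : ℝ => t * s) t := by fun_prop
      have hpc : ContinuousAt (fun t : ℝ => p (t * s)) t := by
        simp only [hpdef]; fun_prop
      have hphic : ContinuousAt (fun t : ℝ => φ (p (t * s))) t :=
        ContinuousAt.comp (f := fun t : ℝ => t * s) (g := fun u : ℝ => φ (p u))
          (hgcAt _ (hts t ht)) hmc
      have hfc : ContinuousAt (fun t : ℝ => f (p s / p (t * s))) t :=
        ContinuousAt.comp (g := f) (f := fun t : ℝ => p s / p (t * s))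
          hf.continuous.continuousAt (continuousAt_const.div hpc (hpne _ (hts t ht)))
      exact (hfc.mul hphic).div hpc (hpne _ (hts t ht))
    have hcont2 : ContinuousOn (fun t : ℝ => ‖φ (p (t * s))‖) (Icc (0:ℝ) 1) := by
      intro t ht
      apply ContinuousAt.continuousWithinAt
      have hmc : ContinuousAt (fun t : ℝ => t * s) t := by fun_prop
      exact (ContinuousAt.comp (f := fun t : ℝ => t * s) (g := fun u : ℝ => φ (p u))
        (hgcAt _ (hts t ht)) hmc).norm
    have hint1 : IntervalIntegrable (fun t : ℝ => ‖f (p s / p (t * s)) * φ (p (t * s)) / p (t * s)‖)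
        volume 0 1 := (hcont1.norm.mono (by rw [uIcc_of_le zero_le_one])).intervalIntegrable
    have hint2 : IntervalIntegrable (fun t : ℝ => (M / B) * ‖φ (p (t * s))‖) volume 0 1 :=
      ((continuousOn_const.mul hcont2).mono (by rw [uIcc_of_le zero_le_one])).intervalIntegrable
    have hJle : ‖J‖ ≤ ∫ t in (0:ℝ)..1, (M / B) * ‖φ (p (t * s))‖ := by
      calc ‖J‖ ≤ ∫ t in (0:ℝ)..1, ‖f (p s / p (t * s)) * φ (p (t * s)) / p (t * s)‖ :=
            intervalIntegral.norm_integral_le_integral_norm zero_le_one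
        _ ≤ _ := intervalIntegral.integral_mono_on zero_le_one hint1 hint2
            (fun t ht => hbnd t ht)
    -- substitution
    have hsub : s * ∫ t in (0:ℝ)..1, ‖φ (p (t * s))‖ = h s := by
      have := intervalIntegral.mul_integral_comp_mul_right (a := (0:ℝ)) (b := 1)
        (f := fun u => ‖φ (p u)‖) s
      simpa using this
    have hJle2 : s * ‖J‖ ≤ (M / B) * h s := by
      have h1 : s * ‖J‖ ≤ s * ∫ t in (0:ℝ)..1, (M / B) * ‖φ (p (t * s))‖ :=
        mul_le_mul_of_nonneg_left hJle hs.1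
      have h2 : s * ∫ t in (0:ℝ)..1, (M / B) * ‖φ (p (t * s))‖ = (M / B) * h s := by
        rw [intervalIntegral.integral_const_mul, ← hsub]; ring
      linarith
    have hfinal : ‖A‖ * ‖φ (p s)‖ ≤ (1 / (2 * Real.pi)) * (‖d‖ * ((M / B) * h s)) := by
      rw [hn]
      have hpi : (0:ℝ) < 2 * Real.pi := by positivity
      have : s * ‖d‖ * ‖J‖ ≤ ‖d‖ * ((M / B) * h s) := by
        calc s * ‖d‖ * ‖J‖ = ‖d‖ * (s * ‖J‖) := by ring
          _ ≤ ‖d‖ * ((M / B) * h s) := mul_le_mul_of_nonneg_left hJle2 (norm_nonneg _)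
      apply mul_le_mul_of_nonneg_left this (by positivity)
    rw [← le_div_iff₀' hApos] at hfinal
    calc ‖φ (p s)‖ ≤ (1 / (2 * Real.pi)) * (‖d‖ * ((M / B) * h s)) / ‖A‖ := hfinal
      _ = K * h s := by
          rw [hKdef]
          field_simp
  -- Gronwall
  have hgr := norm_le_gronwallBound_of_norm_deriv_right_le (f := h)
    (f' := fun s => ‖φ (p s)‖) (δ := 0) (K := K) (ε := 0) (a := 0) (b := 1) hhc
    (fun x hx => (hderiv x (Ico_subset_Icc_self hx)).hasDerivWithinAt)
    (by simp [hhdef])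
    (by
      intro x hx
      have hx' := Ico_subset_Icc_self hx
      rw [Real.norm_of_nonneg (norm_nonneg _), Real.norm_of_nonneg (hhnn x hx')]
      simpa using key x hx')
  have hh1 : h 1 = 0 := by
    have := hgr 1 (by norm_num)
    rw [gronwallBound_ε0] at this
    simp at this
    have h2 := hhnn 1 (by norm_num)
    have h3 : |h 1| ≤ 0 := by simpa [Real.norm_eq_abs] using this
    linarith [abs_nonneg (h 1), le_abs_self (h 1), neg_abs_le (h 1)]
  have hfin : ‖φ (p 1)‖ ≤ 0 := by
    have := key 1 (by norm_num)
    rw [hh1] at this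
    simpa using this
  have : φ (p 1) = 0 := norm_le_zero_iff.mp hfin
  have hp1 : p 1 = ζ := by simp [hpdef, hddef]
  rwa [hp1] at this
end

section
/- Let F(ζ) = 1 + 1/(1−ζ) − 2/(2−ζ) for |ζ| < 1; its Taylor coefficients at 0 are a_0 = 1 and a_n = 1 − 2^{−n} for n ≥ 1. Then the series G(ζ) = 1 + Σ_{m≥0} ζ/(2^m − ζ) converges locally uniformly on the unit disk {|ζ| < 1} to a holomorphic function whose Taylor coefficients at 0 are b_0 = 1 and b_n = 2^n/(2^n − 1) for n ≥ 1. In particular a_n·b_n = 1 for all n ≥ 0, i.e. G is the Hadamard inverse of F. -/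
open Metric Filter

lemma norm_two_c : ‖(2:ℂ)‖ = 2 := by
  have : ((2:ℝ):ℂ) = (2:ℂ) := by norm_num
  rw [← this, Complex.norm_real]; norm_num

lemma tpow_ne_one (n : ℕ) (hn : 1 ≤ n) : (2:ℂ)^n ≠ 1 := by
  intro h
  have h2 : ‖(2:ℂ)^n‖ = 1 := by rw [h, norm_one]
  rw [norm_pow, norm_two_c] at h2
  have h3 : (2:ℝ)^1 ≤ 2^n := pow_le_pow_right₀ one_le_two hn
  have : (2:ℝ)^1 = 2 := pow_one 2
  linarith

lemma aux_ne (m : ℕ) {ζ : ℂ} (h : ‖ζ‖ < 1) : (2:ℂ)^m - ζ ≠ 0 := by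
  rw [sub_ne_zero]
  intro heq
  have : ‖(2:ℂ)^m‖ < 1 := by rw [heq]; exact h
  rw [norm_pow, norm_two_c] at this
  have h2 : (1:ℝ) ≤ 2^m := one_le_pow₀ one_le_two
  linarith

set_option maxHeartbeats 1000000 in
lemma aux_summable {ζ : ℂ} (h : ‖ζ‖ < 1) :
    Summable (fun p : ℕ × ℕ => (ζ / 2^p.1)^(p.2+1)) := by
  have hs1 : Summable (fun m : ℕ => (2⁻¹:ℝ)^m) :=
    summable_geometric_of_lt_one (by norm_num) (by norm_num)
  have hs2 : Summable (fun n : ℕ => ‖ζ‖^(n+1)) := by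
    have := (summable_geometric_of_lt_one (norm_nonneg ζ) h).mul_left (‖ζ‖)
    exact this.congr (fun n => (pow_succ' _ _).symm)
  have hs : Summable (fun p : ℕ × ℕ => (2⁻¹:ℝ)^p.1 * ‖ζ‖^(p.2+1)) :=
    hs1.mul_of_nonneg hs2 (fun m => by positivity) (fun n => by positivity)
  have hle : ∀ p : ℕ × ℕ, ‖(ζ / 2^p.1)^(p.2+1)‖ ≤ (2⁻¹:ℝ)^p.1 * ‖ζ‖^(p.2+1) := by
    rintro ⟨m, n⟩
    rw [norm_pow, norm_div, norm_pow, norm_two_c]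
    have e1 : ‖ζ‖ / 2^m = ‖ζ‖ * (2⁻¹)^m := by rw [inv_pow]; ring
    rw [e1, mul_pow]
    have h1 : ((2⁻¹:ℝ)^m)^(n+1) ≤ ((2⁻¹:ℝ)^m)^1 := by
      apply pow_le_pow_of_le_one (by positivity) _ (Nat.one_le_iff_ne_zero.mpr (Nat.succ_ne_zero n))
      apply pow_le_one₀ <;> norm_num
    calc ‖ζ‖^(n+1) * ((2⁻¹:ℝ)^m)^(n+1) ≤ ‖ζ‖^(n+1) * ((2⁻¹:ℝ)^m)^1 :=
          mul_le_mul_of_nonneg_left h1 (by positivity)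
      _ = (2⁻¹:ℝ)^m * ‖ζ‖^(n+1) := by ring
  exact Summable.of_norm (hs.of_nonneg_of_le (fun p => norm_nonneg _) hle)

lemma aux_row (m : ℕ) {ζ : ℂ} (h : ‖ζ‖ < 1) :
    HasSum (fun n : ℕ => (ζ / 2^m)^(n+1)) (ζ / (2^m - ζ)) := by
  have h2m : (0:ℝ) < 2^m := by positivity
  have h2m' : (2:ℂ)^m ≠ 0 := pow_ne_zero _ two_ne_zero
  have hr : ‖ζ / 2^m‖ < 1 := by
    rw [norm_div, norm_pow, norm_two_c]
    have h1 : (1:ℝ) ≤ 2^m := one_le_pow₀ one_le_two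
    rw [div_lt_one h2m]
    linarith
  have hgeo := (hasSum_geometric_of_norm_lt_one hr).mul_left (ζ / 2^m)
  have he : (fun n : ℕ => (ζ/2^m)^(n+1)) = fun n : ℕ => ζ/2^m * (ζ/2^m)^n := by
    funext n; rw [pow_succ']
  rw [he]
  convert hgeo using 1
  · rfl
  have hne := aux_ne m h
  field_simp

lemma aux_col (n : ℕ) {ζ : ℂ} (h : ‖ζ‖ < 1) :
    HasSum (fun m : ℕ => (ζ / 2^m)^(n+1))
      ((2:ℂ)^(n+1) / ((2:ℂ)^(n+1) - 1) * ζ^(n+1)) := by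
  have hs : ‖((2:ℂ)^(n+1))⁻¹‖ < 1 := by
    rw [norm_inv, norm_pow, norm_two_c]
    rw [inv_lt_one₀ (by positivity)]
    have h3 : (2:ℝ)^1 ≤ 2^(n+1) := pow_le_pow_right₀ one_le_two (Nat.le_add_left 1 n)
    have : (2:ℝ)^1 = 2 := pow_one 2
    linarith
  have hg := (hasSum_geometric_of_norm_lt_one hs).mul_left (ζ^(n+1))
  have he : (fun m : ℕ => (ζ/2^m)^(n+1)) =
      fun m : ℕ => ζ^(n+1) * (((2:ℂ)^(n+1))⁻¹)^m := by
    funext m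
    rw [div_pow, ← pow_mul, ← inv_pow, ← pow_mul, Nat.mul_comm]
    rw [div_eq_mul_inv, inv_pow]
  rw [he]
  convert hg using 1
  · rfl
  have h1 : (2:ℂ)^(n+1) ≠ 0 := pow_ne_zero _ two_ne_zero
  have h2 : (2:ℂ)^(n+1) - 1 ≠ 0 :=
    sub_ne_zero.mpr (tpow_ne_one _ (Nat.le_add_left 1 n))
  field_simp

lemma part2_aux :
    TendstoLocallyUniformlyOn
      (fun (N : ℕ) (ζ : ℂ) => 1 + ∑ m ∈ Finset.range N, ζ / ((2 : ℂ) ^ m - ζ))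
      (fun ζ : ℂ => 1 + ∑' m : ℕ, ζ / ((2 : ℂ) ^ m - ζ)) atTop (ball (0 : ℂ) 1) := by
  rw [tendstoLocallyUniformlyOn_iff_forall_isCompact isOpen_ball]
  intro K hK hKc
  rcases K.eq_empty_or_nonempty with rfl | hne
  · exact tendstoUniformlyOn_empty
  obtain ⟨x0, hx0K, hx0⟩ := hKc.exists_isMaxOn hne continuous_norm.continuousOn
  set r := ‖x0‖ with hr
  have hr0 : 0 ≤ r := norm_nonneg _
  have hr1 : r < 1 := by
    have := hK hx0K
    rwa [mem_ball, dist_zero_right] at this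
  have hu : Summable (fun m : ℕ => r / (1 - r) * (2⁻¹:ℝ)^m) :=
    (summable_geometric_of_lt_one (by norm_num) (by norm_num)).mul_left _
  have hb : ∀ (m : ℕ), ∀ x ∈ K, ‖x / ((2:ℂ)^m - x)‖ ≤ r / (1 - r) * (2⁻¹:ℝ)^m := by
    intro m x hx
    have hxr : ‖x‖ ≤ r := hx0 hx
    have hx1 : ‖x‖ < 1 := lt_of_le_of_lt hxr hr1
    have h2m : (0:ℝ) < 2^m := by positivity
    have hlow : 2^m * (1 - r) ≤ ‖(2:ℂ)^m - x‖ := by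
      have h1 : ‖(2:ℂ)^m‖ - ‖x‖ ≤ ‖(2:ℂ)^m - x‖ := norm_sub_norm_le _ _
      rw [norm_pow, norm_two_c] at h1
      have hpm : (1:ℝ) ≤ 2^m := one_le_pow₀ one_le_two
      nlinarith
    have hpos : (0:ℝ) < 2^m * (1 - r) := by nlinarith
    rw [norm_div]
    calc ‖x‖ / ‖(2:ℂ)^m - x‖ ≤ r / (2^m * (1 - r)) := by
          apply div_le_div₀ hr0 hxr hpos hlow
      _ = r / (1 - r) * (2⁻¹:ℝ)^m := by
          rw [inv_pow, ← div_eq_mul_inv, div_div, mul_comm (1-r)]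
  have h := tendstoUniformlyOn_tsum_nat hu hb
  have hc : TendstoUniformlyOn (fun (_ : ℕ) (_ : ℂ) => (1:ℂ)) (fun _ => (1:ℂ)) atTop K := by
    simp only [tendstoUniformlyOn_iff]
    intro ε hε
    filter_upwards with N x _
    simpa using hε
  have := hc.add h
  simpa [Pi.add_def] using this

set_option maxHeartbeats 1600000 in
/-- The Hadamard inverse of `F(ζ) = 1 + 1/(1−ζ) − 2/(2−ζ)` (Taylor coefficients `a_0 = 1`,
`a_n = 1 − 2^{−n}`) is `G(ζ) = 1 + Σ_{m≥0} ζ/(2^m−ζ)`: the series converges locally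
uniformly on the unit disk to a holomorphic function with Taylor coefficients `b_0 = 1`,
`b_n = 2^n/(2^n−1)`, and `a_n b_n = 1` for all `n`. -/
theorem stmt13 (a b : ℕ → ℂ)
    (ha0 : a 0 = 1) (han : ∀ n : ℕ, 1 ≤ n → a n = 1 - ((2 : ℂ) ^ n)⁻¹)
    (hb0 : b 0 = 1) (hbn : ∀ n : ℕ, 1 ≤ n → b n = (2 : ℂ) ^ n / ((2 : ℂ) ^ n - 1)) :
    (∀ ζ : ℂ, ‖ζ‖ < 1 →
      HasSum (fun n => a n * ζ ^ n) (1 + 1 / (1 - ζ) - 2 / (2 - ζ))) ∧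
    TendstoLocallyUniformlyOn
      (fun (N : ℕ) (ζ : ℂ) => 1 + ∑ m ∈ Finset.range N, ζ / ((2 : ℂ) ^ m - ζ))
      (fun ζ : ℂ => 1 + ∑' m : ℕ, ζ / ((2 : ℂ) ^ m - ζ)) atTop (ball (0 : ℂ) 1) ∧
    DifferentiableOn ℂ (fun ζ : ℂ => 1 + ∑' m : ℕ, ζ / ((2 : ℂ) ^ m - ζ)) (ball (0 : ℂ) 1) ∧
    (∀ ζ : ℂ, ‖ζ‖ < 1 →
      HasSum (fun n => b n * ζ ^ n) (1 + ∑' m : ℕ, ζ / ((2 : ℂ) ^ m - ζ))) ∧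
    (∀ n : ℕ, a n * b n = 1) := by
  refine ⟨?_, part2_aux, ?_, ?_, ?_⟩
  · -- Part 1
    intro ζ h
    have h1 : HasSum (fun n : ℕ => ζ^n) (1-ζ)⁻¹ := hasSum_geometric_of_norm_lt_one h
    have hz2 : ‖ζ/2‖ < 1 := by
      rw [norm_div, norm_two_c]
      linarith [norm_nonneg ζ]
    have h2 : HasSum (fun n : ℕ => (ζ/2)^n) (1-ζ/2)⁻¹ := hasSum_geometric_of_norm_lt_one hz2
    have h3 := (h1.sub h2).update 0 1
    have hfe : (fun n => a n * ζ ^ n) =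
        Function.update (fun n : ℕ => ζ^n - (ζ/2)^n) 0 1 := by
      funext n
      cases n with
      | zero => simp [ha0]
      | succ k =>
        rw [Function.update_of_ne (Nat.succ_ne_zero k),
          han (k+1) (Nat.succ_le_succ (Nat.zero_le k)), div_pow]
        have h2k : (2:ℂ)^(k+1) ≠ 0 := pow_ne_zero _ two_ne_zero
        field_simp
    rw [hfe]
    convert h3 using 1
    · rfl
    have hd1 : (1:ℂ) - ζ ≠ 0 := by simpa using aux_ne 0 h
    have hd2 : (2:ℂ) - ζ ≠ 0 := by simpa using aux_ne 1 h
    have hd2' : (1:ℂ) - ζ/2 ≠ 0 := by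
      intro hc
      apply hd2
      linear_combination 2 * hc
    field_simp
    ring
  · -- Part 3
    apply part2_aux.differentiableOn _ isOpen_ball
    filter_upwards with N
    apply DifferentiableOn.add (differentiableOn_const 1)
    apply DifferentiableOn.fun_sum
    intro m _
    apply DifferentiableOn.div differentiableOn_id
      ((differentiableOn_const _).sub differentiableOn_id)
    intro x hx
    exact aux_ne m (by rwa [mem_ball, dist_zero_right] at hx)
  · -- Part 4
    intro ζ h
    have hf := aux_summable h
    set T := ∑' p : ℕ × ℕ, (ζ / 2^p.1)^(p.2+1) with hT
    have hG : HasSum (fun m : ℕ => ζ / ((2:ℂ)^m - ζ)) T :=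
      hf.hasSum.prod_fiberwise (fun m => aux_row m h)
    have hswap : HasSum (fun p : ℕ × ℕ => (ζ / 2^p.2)^(p.1+1)) T :=
      ((Equiv.prodComm ℕ ℕ).hasSum_iff).mpr hf.hasSum
    have hB : HasSum (fun n : ℕ => b (n+1) * ζ^(n+1)) T := by
      have he : (fun n : ℕ => b (n+1) * ζ^(n+1)) =
          fun n : ℕ => (2:ℂ)^(n+1) / ((2:ℂ)^(n+1) - 1) * ζ^(n+1) := by
        funext n
        rw [hbn _ (Nat.le_add_left 1 n)]
      rw [he]
      exact hswap.prod_fiberwise (fun n => aux_col n h)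
    have hB2 := (hasSum_nat_add_iff (f := fun n => b n * ζ^n) 1).mp hB
    rw [hG.tsum_eq]
    convert hB2 using 1
    · rfl
    simp [hb0]
    ring
  · -- Part 5
    intro n
    cases n with
    | zero => rw [ha0, hb0]; norm_num
    | succ k =>
      have hk : 1 ≤ k + 1 := Nat.succ_le_succ (Nat.zero_le k)
      rw [han _ hk, hbn _ hk]
      have h1 : (2:ℂ)^(k+1) ≠ 0 := pow_ne_zero _ two_ne_zero
      have h2 : (2:ℂ)^(k+1) - 1 ≠ 0 := sub_ne_zero.mpr (tpow_ne_one _ hk)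
      field_simp
end
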